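/- arXiv:1904.09833 — 5 statements merged into one kernel-verified Lean document; each statement's English description precedes it below -/
import Mathlib

section
/- Let A be a self-adjoint operator on a separable complex Hilbert space H with cyclic unit vector φ, and for γ ∈ ℝ let A_γ = A + γ(·,φ)φ with spectral measure μ_γ with respect to φ, and Borel transform F_γ(z) = ∫_ℝ dμ_γ(t)/(t − z), F = F_0. Then for every z ∈ ℂ \ ℝ the Aronszajn–Krein formula holds: F_γ(z) = F(z)/(1 + γ F(z)). -/
open MeasureTheory Filter Set Complex
open scoped ENNReal Topology InnerProductSpace

variable {H : Type*} [NormedAddCommGroup H] [InnerProductSpace ℂ H] [CompleteSpace H]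

/-- The rank-one perturbation `A_γ = A + γ (·,φ)φ` of a (possibly unbounded) operator `A`. -/
noncomputable def rankOnePert (A : H →ₗ.[ℂ] H) (φ : H) (γ : ℝ) : H →ₗ.[ℂ] H :=
  ⟨A.domain, A.toFun + (γ : ℂ) •
    ((((innerSL ℂ φ).smulRight φ : H →L[ℂ] H) : H →ₗ[ℂ] H).comp A.domain.subtype)⟩

/-- The Borel transform `F(z) = ∫ dμ(t) / (t - z)` of a measure `μ` on `ℝ`. -/
noncomputable def borelTransform (μ : Measure ℝ) (z : ℂ) : ℂ :=
  ∫ t : ℝ, ((t : ℂ) - z)⁻¹ ∂μ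

/-!
Let `y = R₀(z) φ`, so that `(A - z) y = φ`. Then `(A_γ - z) y = φ + γ ⟪φ, y⟫ φ = (1 + γ F(z)) φ`,
and applying `R_γ(z)` gives `y = (1 + γ F(z)) R_γ(z) φ`; pairing with `φ` yields
`F(z) = (1 + γ F(z)) F_γ(z)`. The factor `1 + γ F(z)` cannot vanish: otherwise `y = 0`, and then
`φ = (A - z) y = 0`.
-/

namespace rankOnePert

variable {E : Type*} [NormedAddCommGroup E] [InnerProductSpace ℂ E]
  {A : E →ₗ.[ℂ] E} {φ : E} {γ : ℝ} {z : ℂ} {y : E}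

theorem apply (hy : y ∈ A.domain) :
    rankOnePert A φ γ ⟨y, hy⟩ = A ⟨y, hy⟩ + (γ : ℂ) • ⟪φ, y⟫_ℂ • φ := by
  simp [rankOnePert, LinearPMap.mk_apply]

theorem zero_apply (hy : y ∈ A.domain) : rankOnePert A φ 0 ⟨y, hy⟩ = A ⟨y, hy⟩ := by
  simp [apply]

theorem sub_smul_eq_smul (hy : y ∈ A.domain) (hAy : A ⟨y, hy⟩ - z • y = φ) :
    rankOnePert A φ γ ⟨y, hy⟩ - z • y = (1 + γ * ⟪φ, y⟫_ℂ) • φ := by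
  rw [apply, ← hAy]
  module

variable {Rγ : E →L[ℂ] E}
  (hRγ : ∀ x (hx : x ∈ (rankOnePert A φ γ).domain), Rγ (rankOnePert A φ γ ⟨x, hx⟩ - z • x) = x)
include hRγ

theorem smul_resolvent_apply (hy : y ∈ A.domain) (hAy : A ⟨y, hy⟩ - z • y = φ) :
    (1 + γ * ⟪φ, y⟫_ℂ) • Rγ φ = y := by
  rw [← map_smul, ← sub_smul_eq_smul hy hAy]
  exact hRγ y hy

theorem one_add_mul_inner_ne_zero (hφ : φ ≠ 0) (hy : y ∈ A.domain)
    (hAy : A ⟨y, hy⟩ - z • y = φ) : 1 + γ * ⟪φ, y⟫_ℂ ≠ 0 := by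
  intro h
  have hy0 : y = 0 := by rw [← smul_resolvent_apply hRγ hy hAy, h, zero_smul]
  subst hy0
  apply hφ
  rw [← hAy, smul_zero, sub_zero]
  exact A.map_zero

theorem inner_resolvent_apply_eq_div (hφ : φ ≠ 0) (hy : y ∈ A.domain)
    (hAy : A ⟨y, hy⟩ - z • y = φ) : ⟪φ, Rγ φ⟫_ℂ = ⟪φ, y⟫_ℂ / (1 + γ * ⟪φ, y⟫_ℂ) := by
  rw [eq_div_iff (one_add_mul_inner_ne_zero hRγ hφ hy hAy), mul_comm, ← inner_smul_right,
    smul_resolvent_apply hRγ hy hAy]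

end rankOnePert

/-- The self-adjoint operators `A_γ` are encoded through their resolvents `R γ z` and the
spectral measures through `((A_γ - z)⁻¹ φ, φ) = ∫ (t - z)⁻¹ dμ_γ`. -/
theorem aronszajn_krein_formula_general
    (A : H →ₗ.[ℂ] H)
    (φ : H) (hφ : ‖φ‖ = 1)
    (R : ℝ → ℂ → H →L[ℂ] H)
    (hR1 : ∀ (γ : ℝ) (z : ℂ), z.im ≠ 0 → ∀ x : H,
      ∃ h : R γ z x ∈ (rankOnePert A φ γ).domain,
        (rankOnePert A φ γ) ⟨R γ z x, h⟩ - z • R γ z x = x)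
    (hR2 : ∀ (γ : ℝ) (z : ℂ), z.im ≠ 0 → ∀ y (hy : y ∈ (rankOnePert A φ γ).domain),
      R γ z ((rankOnePert A φ γ) ⟨y, hy⟩ - z • y) = y)
    (μ : ℝ → Measure ℝ)
    (hμ : ∀ (γ : ℝ) (z : ℂ), z.im ≠ 0 → ⟪φ, R γ z φ⟫_ℂ = borelTransform (μ γ) z)
    (γ : ℝ) :
    ∀ z : ℂ, z.im ≠ 0 →
      borelTransform (μ γ) z = borelTransform (μ 0) z / (1 + γ * borelTransform (μ 0) z) := by
  intro z hz
  have hφ0 : φ ≠ 0 := norm_ne_zero_iff.mp (hφ ▸ one_ne_zero)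
  obtain ⟨hy, hAy⟩ := hR1 0 z hz φ
  have hA0 : rankOnePert A φ 0 ⟨R 0 z φ, hy⟩ = A ⟨R 0 z φ, hy⟩ :=
    rankOnePert.zero_apply (A := A) hy
  rw [hA0] at hAy
  rw [← hμ γ z hz, ← hμ 0 z hz]
  exact rankOnePert.inner_resolvent_apply_eq_div (hR2 γ z hz) hφ0 hy hAy

/-- **Aronszajn–Krein formula**: in the rank-one perturbation setting, the Borel transforms of
the spectral measures `μ_γ` (w.r.t. the cyclic unit vector `φ`) of `A_γ = A + γ(·,φ)φ` satisfy
`F_γ(z) = F(z) / (1 + γ F(z))` for all non-real `z`.  The self-adjoint operators `A_γ` are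
encoded through their resolvents `R γ z` and the spectral measures through
`((A_γ - z)⁻¹ φ, φ) = ∫ (t - z)⁻¹ dμ_γ`. -/
theorem aronszajn_krein_formula
    [TopologicalSpace.SeparableSpace H]
    (A : H →ₗ.[ℂ] H) (hA : IsSelfAdjoint A)
    (φ : H) (hφ : ‖φ‖ = 1)
    (R : ℝ → ℂ → H →L[ℂ] H)
    (hR1 : ∀ (γ : ℝ) (z : ℂ), z.im ≠ 0 → ∀ x : H,
      ∃ h : R γ z x ∈ (rankOnePert A φ γ).domain,
        (rankOnePert A φ γ) ⟨R γ z x, h⟩ - z • R γ z x = x)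
    (hR2 : ∀ (γ : ℝ) (z : ℂ), z.im ≠ 0 → ∀ y (hy : y ∈ (rankOnePert A φ γ).domain),
      R γ z ((rankOnePert A φ γ) ⟨y, hy⟩ - z • y) = y)
    (hcyc : (Submodule.span ℂ {x : H | ∃ z : ℂ, z.im ≠ 0 ∧ x = R 0 z φ}).topologicalClosure = ⊤)
    (μ : ℝ → Measure ℝ) (hfin : ∀ γ, IsFiniteMeasure (μ γ))
    (hμ : ∀ (γ : ℝ) (z : ℂ), z.im ≠ 0 → ⟪φ, R γ z φ⟫_ℂ = borelTransform (μ γ) z)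
    (γ : ℝ) :
    ∀ z : ℂ, z.im ≠ 0 →
      borelTransform (μ γ) z = borelTransform (μ 0) z / (1 + γ * borelTransform (μ 0) z) :=
  aronszajn_krein_formula_general A φ hφ R hR1 hR2 μ hμ γ
end

section
/- In the rank-one perturbation setting, for any two distinct parameters γ ≠ β in ℝ, the singular parts (with respect to Lebesgue measure) of the spectral measures μ_γ and μ_β are mutually singular. -/
open MeasureTheory Filter Set Complex
open scoped ENNReal Topology InnerProductSpace

variable {H : Type*} [NormedAddCommGroup H] [InnerProductSpace ℂ H] [CompleteSpace H]

/-!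
The Borel transforms `F_δ(z) = ⟪φ, (A_δ - z)⁻¹ φ⟫` satisfy the rank-one resolvent identity
`F_γ - F_β = (β - γ) F_γ F_β`, i.e. `(1 - (γ - β) F_γ) (1 + (γ - β) F_β) = 1`. As
`‖1 - c F‖ ≥ |c| |Im F|` for real `c`, the imaginary parts of `F_γ(x + ir)` and `F_β(x + ir)`
cannot both tend to `+∞` as `r → 0⁺`. On the other hand `Im F_δ(x + ir) ≥ μ_δ [x - r, x + r] / 2r`
(Poisson kernel), and by Besicovitch differentiation a measure singular to Lebesgue measure has
infinite symmetric derivative almost everywhere. So the singular part of `μ_δ` lives on the set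
where `Im F_δ(x + ir) → +∞`, and these sets are disjoint for `γ ≠ β`.
-/

section RankOnePert

variable {E : Type*} [NormedAddCommGroup E] [InnerProductSpace ℂ E]

lemma rankOnePert_apply_eq_add (A : E →ₗ.[ℂ] E) (φ : E) (γ β : ℝ)
    (x : (rankOnePert A φ β).domain) :
    rankOnePert A φ β x = rankOnePert A φ γ x + (((β : ℂ) - γ) * ⟪φ, (x : E)⟫_ℂ) • φ := by
  change A.toFun x + (β : ℂ) • (⟪φ, (x : E)⟫_ℂ • φ) =
    A.toFun x + (γ : ℂ) • (⟪φ, (x : E)⟫_ℂ • φ) + _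
  module

lemma inner_resolvent_rankOnePert_sub (A : E →ₗ.[ℂ] E) (φ : E) (γ β : ℝ) (z : ℂ)
    (Rγ Rβ : E →L[ℂ] E)
    (hRγ : ∃ h : Rγ φ ∈ (rankOnePert A φ γ).domain,
      rankOnePert A φ γ ⟨Rγ φ, h⟩ - z • Rγ φ = φ)
    (hRβ : ∀ y (hy : y ∈ (rankOnePert A φ β).domain),
      Rβ (rankOnePert A φ β ⟨y, hy⟩ - z • y) = y) :
    ⟪φ, Rγ φ⟫_ℂ - ⟪φ, Rβ φ⟫_ℂ = ((β : ℂ) - γ) * ⟪φ, Rγ φ⟫_ℂ * ⟪φ, Rβ φ⟫_ℂ := by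
  obtain ⟨hdom, hres⟩ := hRγ
  have hshift : rankOnePert A φ β ⟨Rγ φ, hdom⟩ - z • Rγ φ
      = φ + (((β : ℂ) - γ) * ⟪φ, Rγ φ⟫_ℂ) • φ := by
    rw [rankOnePert_apply_eq_add A φ γ β, add_sub_right_comm]
    exact congrArg (· + _) hres
  have h := congrArg (⟪φ, Rβ ·⟫_ℂ) hshift
  simp only [hRβ _ hdom, map_add, map_smul, inner_add_right, inner_smul_right] at h
  linear_combination h

end RankOnePert

lemma integrable_inv_ofReal_sub (μ : Measure ℝ) [IsFiniteMeasure μ] {z : ℂ} (hz : z.im ≠ 0) :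
    Integrable (fun t : ℝ => ((t : ℂ) - z)⁻¹) μ := by
  have hne : ∀ t : ℝ, (t : ℂ) - z ≠ 0 := fun t h => hz (by simpa using congrArg im h)
  refine (integrable_const |z.im|⁻¹).mono'
    ((continuous_ofReal.sub continuous_const).inv₀ hne).aestronglyMeasurable
    (.of_forall fun t => ?_)
  rw [norm_inv]
  refine inv_anti₀ (abs_pos.mpr hz) ?_
  simpa using abs_im_le_norm ((t : ℂ) - z)

lemma im_inv_ofReal_sub (t x r : ℝ) :
    (((t : ℂ) - (x + r * I))⁻¹).im = r / ((t - x) ^ 2 + r ^ 2) := by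
  simp only [inv_im, sub_im, sub_re, add_im, add_re, ofReal_im, ofReal_re, mul_im, mul_re,
    I_re, I_im, normSq_apply]
  ring

lemma measure_closedBall_div_le_im_borelTransform (μ : Measure ℝ) [IsFiniteMeasure μ]
    (x : ℝ) {r : ℝ} (hr : 0 < r) :
    (μ (Metric.closedBall x r)).toReal / (2 * r) ≤ (borelTransform μ (x + r * I)).im := by
  have hint := integrable_inv_ofReal_sub μ (z := x + r * I) (by simpa using hr.ne')
  have hkernel : ∀ t ∈ Metric.closedBall x r, 1 / (2 * r) ≤ (((t : ℂ) - (x + r * I))⁻¹).im := by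
    intro t ht
    have ht' : (t - x) ^ 2 ≤ r ^ 2 := sq_le_sq' (abs_le.mp ht).1 (abs_le.mp ht).2
    rw [im_inv_ofReal_sub, div_le_div_iff₀ (by positivity) (by positivity)]
    nlinarith
  have hnonneg : ∀ t : ℝ, 0 ≤ (((t : ℂ) - (x + r * I))⁻¹).im := fun t => by
    rw [im_inv_ofReal_sub]; positivity
  calc (μ (Metric.closedBall x r)).toReal / (2 * r)
      = 1 / (2 * r) * (μ (Metric.closedBall x r)).toReal := by ring
    _ ≤ ∫ t in Metric.closedBall x r, (((t : ℂ) - (x + r * I))⁻¹).im ∂μ :=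
        setIntegral_ge_of_const_le_real measurableSet_closedBall (measure_ne_top μ _) hkernel
          hint.im.integrableOn
    _ ≤ ∫ t, (((t : ℂ) - (x + r * I))⁻¹).im ∂μ :=
        setIntegral_le_integral hint.im (.of_forall hnonneg)
    _ = (borelTransform μ (x + r * I)).im := integral_im hint

lemma ae_tendsto_measure_closedBall_div_atTop_of_mutuallySingular (ν : Measure ℝ)
    [IsLocallyFiniteMeasure ν] (hν : ν ⟂ₘ volume) :
    ∀ᵐ x ∂ν, Tendsto (fun r => (ν (Metric.closedBall x r)).toReal / (2 * r)) (𝓝[>] 0) atTop := by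
  filter_upwards [(Besicovitch.vitaliFamily ν).ae_eventually_measure_zero_of_singular hν.symm]
    with x hx
  have hratio : Tendsto (fun r => (volume (Metric.closedBall x r) / ν (Metric.closedBall x r))⁻¹)
      (𝓝[>] 0) (𝓝 ∞) := by
    simpa using tendsto_inv_iff.2 (hx.comp (Besicovitch.tendsto_filterAt ν x))
  rw [← ENNReal.tendsto_ofReal_nhds_top]
  refine hratio.congr' ?_
  filter_upwards [self_mem_nhdsWithin] with r (hr : 0 < r)
  have hball : ν (Metric.closedBall x r) ≠ ∞ := measure_closedBall_lt_top.ne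
  rw [ENNReal.inv_div (Or.inl hball) (Or.inr (by simp [hr])), Real.volume_closedBall,
    ENNReal.ofReal_div_of_pos (by positivity), ENNReal.ofReal_toReal hball]

lemma ae_singularPart_tendsto_im_borelTransform (μ : Measure ℝ) [IsFiniteMeasure μ] :
    ∀ᵐ x : ℝ ∂μ.singularPart volume,
      Tendsto (fun r : ℝ => (borelTransform μ (x + r * I)).im) (𝓝[>] 0) atTop := by
  filter_upwards [ae_tendsto_measure_closedBall_div_atTop_of_mutuallySingular _
    (μ.mutuallySingular_singularPart _)] with x hx
  refine tendsto_atTop_mono' _ ?_ hx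
  filter_upwards [self_mem_nhdsWithin] with r (hr : 0 < r)
  calc ((μ.singularPart volume) (Metric.closedBall x r)).toReal / (2 * r)
      ≤ (μ (Metric.closedBall x r)).toReal / (2 * r) := by
        gcongr
        exacts [measure_ne_top _ _, μ.singularPart_le volume]
    _ ≤ _ := measure_closedBall_div_le_im_borelTransform μ x hr

lemma not_tendsto_im_atTop_of_mul_eq_one {α : Type*} {l : Filter α} [l.NeBot] {c : ℝ}
    (hc : c ≠ 0) {f g : α → ℂ} (hfg : ∀ᶠ r in l, (1 - c * f r) * (1 + c * g r) = 1)
    (hf : Tendsto (fun r => (f r).im) l atTop) : ¬Tendsto (fun r => (g r).im) l atTop := by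
  intro hg
  obtain ⟨r, hr, hlarge⟩ := (hfg.and ((hf.atTop_mul_atTop₀ hg).eventually_gt_atTop
    (1 / c ^ 2))).exists
  have hf' : |c| * |(f r).im| ≤ ‖1 - c * f r‖ := by
    simpa [abs_mul] using abs_im_le_norm (1 - (c : ℂ) * f r)
  have hg' : |c| * |(g r).im| ≤ ‖1 + c * g r‖ := by
    simpa [abs_mul] using abs_im_le_norm (1 + (c : ℂ) * g r)
  have hbound : c ^ 2 * ((f r).im * (g r).im) ≤ 1 := by
    calc c ^ 2 * ((f r).im * (g r).im)
        ≤ (|c| * |(f r).im|) * (|c| * |(g r).im|) := by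
          rw [mul_mul_mul_comm, abs_mul_abs_self, ← abs_mul, ← sq]
          gcongr
          exact le_abs_self _
      _ ≤ ‖1 - (c : ℂ) * f r‖ * ‖1 + (c : ℂ) * g r‖ := by gcongr
      _ = 1 := by rw [← norm_mul, hr, norm_one]
  rw [div_lt_iff₀' (by positivity)] at hlarge
  linarith

theorem aronszajnDonoghue_singular_parts_mutuallySingular_general
    (A : H →ₗ.[ℂ] H)
    (φ : H)
    (R : ℝ → ℂ → H →L[ℂ] H)
    (hR1 : ∀ (γ : ℝ) (z : ℂ), z.im ≠ 0 → ∀ x : H,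
      ∃ h : R γ z x ∈ (rankOnePert A φ γ).domain,
        (rankOnePert A φ γ) ⟨R γ z x, h⟩ - z • R γ z x = x)
    (hR2 : ∀ (γ : ℝ) (z : ℂ), z.im ≠ 0 → ∀ y (hy : y ∈ (rankOnePert A φ γ).domain),
      R γ z ((rankOnePert A φ γ) ⟨y, hy⟩ - z • y) = y)
    (μ : ℝ → Measure ℝ) (hfin : ∀ γ, IsFiniteMeasure (μ γ))
    (hμ : ∀ (γ : ℝ) (z : ℂ), z.im ≠ 0 → ⟪φ, R γ z φ⟫_ℂ = borelTransform (μ γ) z)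
    (γ β : ℝ) (hγβ : γ ≠ β) :
    ((μ γ).singularPart volume).MutuallySingular ((μ β).singularPart volume) := by
  set T : ℝ → Set ℝ := fun δ =>
    {x | Tendsto (fun r : ℝ => (borelTransform (μ δ) (x + r * I)).im) (𝓝[>] 0) atTop}
  have hcarrier (δ : ℝ) : ∀ᵐ x ∂(μ δ).singularPart volume, x ∈ T δ :=
    have := hfin δ
    ae_singularPart_tendsto_im_borelTransform (μ δ)
  have hidentity (z : ℂ) (hz : z.im ≠ 0) : (1 - ((γ - β : ℝ) : ℂ) * borelTransform (μ γ) z) *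
      (1 + ((γ - β : ℝ) : ℂ) * borelTransform (μ β) z) = 1 := by
    have h := inner_resolvent_rankOnePert_sub A φ γ β z (R γ z) (R β z) (hR1 γ z hz φ)
      (hR2 β z hz)
    rw [hμ γ z hz, hμ β z hz] at h
    push_cast
    linear_combination ((β : ℂ) - γ) * h
  have hdisjoint : Disjoint (T γ) (T β) := by
    refine Set.disjoint_left.2 fun x hxγ hxβ =>
      not_tendsto_im_atTop_of_mul_eq_one (sub_ne_zero.2 hγβ) ?_ hxγ hxβ
    filter_upwards [self_mem_nhdsWithin] with r (hr : 0 < r)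
    exact hidentity _ (by simpa using hr.ne')
  refine Measure.MutuallySingular.mk (s := (T γ)ᶜ) (t := (T β)ᶜ) (hcarrier γ) (hcarrier β) ?_
  rw [← compl_inter, hdisjoint.inter_eq, compl_empty]

/-- **Aronszajn–Donoghue, mutual singularity**: for distinct parameters `γ ≠ β`, the singular
parts (w.r.t. Lebesgue measure) of the spectral measures `μ_γ` and `μ_β` are mutually
singular. -/
theorem aronszajnDonoghue_singular_parts_mutuallySingular
    [TopologicalSpace.SeparableSpace H]
    (A : H →ₗ.[ℂ] H) (hA : IsSelfAdjoint A)
    (φ : H) (hφ : ‖φ‖ = 1)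
    (R : ℝ → ℂ → H →L[ℂ] H)
    (hR1 : ∀ (γ : ℝ) (z : ℂ), z.im ≠ 0 → ∀ x : H,
      ∃ h : R γ z x ∈ (rankOnePert A φ γ).domain,
        (rankOnePert A φ γ) ⟨R γ z x, h⟩ - z • R γ z x = x)
    (hR2 : ∀ (γ : ℝ) (z : ℂ), z.im ≠ 0 → ∀ y (hy : y ∈ (rankOnePert A φ γ).domain),
      R γ z ((rankOnePert A φ γ) ⟨y, hy⟩ - z • y) = y)
    (hcyc : (Submodule.span ℂ {x : H | ∃ z : ℂ, z.im ≠ 0 ∧ x = R 0 z φ}).topologicalClosure = ⊤)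
    (μ : ℝ → Measure ℝ) (hfin : ∀ γ, IsFiniteMeasure (μ γ))
    (hμ : ∀ (γ : ℝ) (z : ℂ), z.im ≠ 0 → ⟪φ, R γ z φ⟫_ℂ = borelTransform (μ γ) z)
    (γ β : ℝ) (hγβ : γ ≠ β) :
    ((μ γ).singularPart volume).MutuallySingular ((μ β).singularPart volume) :=
  aronszajnDonoghue_singular_parts_mutuallySingular_general A φ R hR1 hR2 μ hfin hμ γ β hγβ
end

section
/- In the rank-one perturbation setting, assume γ ≠ 0 and let λ ∈ P_γ, i.e. lim_{y→0+} F(λ+iy) = −1/γ and G(λ) = ∫_ℝ dμ(t)/(λ − t)² < ∞. Then the point mass of the spectral measure μ_γ at λ is μ_γ({λ}) = 1/(γ² G(λ)). -/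
open MeasureTheory Filter Set Complex
open scoped ENNReal Topology InnerProductSpace

variable {H : Type*} [NormedAddCommGroup H] [InnerProductSpace ℂ H] [CompleteSpace H]

/-- `G(x) = ∫ dμ(t) / (x - t)²`, with values in `[0, ∞]`. -/
noncomputable def Gtransform (μ : Measure ℝ) (x : ℝ) : ℝ≥0∞ :=
  ∫⁻ t : ℝ, (ENNReal.ofReal ((x - t) ^ 2))⁻¹ ∂μ

section
variable (ν : Measure ℝ) [IsFiniteMeasure ν] (l : ℝ)

lemma pm_null (hG : ∫⁻ t, (ENNReal.ofReal ((l-t)^2))⁻¹ ∂ν < ∞) : ν {l} = 0 := by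
  by_contra hne
  have h1 : ∫⁻ t in {l}, (ENNReal.ofReal ((l-t)^2))⁻¹ ∂ν ≤ ∫⁻ t, (ENNReal.ofReal ((l-t)^2))⁻¹ ∂ν :=
    setLIntegral_le_lintegral _ _
  rw [lintegral_singleton] at h1
  simp only [sub_self] at h1
  rw [show ((0:ℝ)^2) = 0 by ring] at h1
  simp only [ENNReal.ofReal_zero, ENNReal.inv_zero] at h1
  rw [ENNReal.top_mul hne] at h1
  exact absurd (lt_of_le_of_lt h1 hG) (lt_irrefl _)

lemma pm_ae_ne (hG : ∫⁻ t, (ENNReal.ofReal ((l-t)^2))⁻¹ ∂ν < ∞) : ∀ᵐ t ∂ν, t ≠ l := by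
  have := pm_null ν l hG
  rw [ae_iff]
  convert this using 2
  ext t; simp

lemma pm_int_sq (hG : ∫⁻ t, (ENNReal.ofReal ((l-t)^2))⁻¹ ∂ν < ∞) :
    Integrable (fun t => ((t-l)^2)⁻¹) ν := by
  refine ⟨(((measurable_id.sub measurable_const).pow_const 2).inv).aestronglyMeasurable, ?_⟩
  rw [hasFiniteIntegral_iff_norm]
  have hae : ∀ᵐ t ∂ν, ENNReal.ofReal ‖((t-l)^2)⁻¹‖ = (ENNReal.ofReal ((l-t)^2))⁻¹ := by
    filter_upwards [pm_ae_ne ν l hG] with t ht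
    have hne : t - l ≠ 0 := sub_ne_zero.mpr ht
    have hpos : 0 < (t-l)^2 := by positivity
    rw [Real.norm_eq_abs, _root_.abs_of_nonneg (by positivity),
      show (l-t)^2 = (t-l)^2 by ring, ← ENNReal.ofReal_inv_of_pos hpos]
  rw [lintegral_congr_ae hae]
  exact hG

lemma pm_int_abs (hG : ∫⁻ t, (ENNReal.ofReal ((l-t)^2))⁻¹ ∂ν < ∞) :
    Integrable (fun t => |t-l|⁻¹) ν := by
  refine Integrable.mono' ((pm_int_sq ν l hG).add (integrable_const 1)) ?_ ?_
  · exact (((measurable_id.sub measurable_const).abs).inv).aestronglyMeasurable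
  · filter_upwards with t
    rw [Real.norm_eq_abs, _root_.abs_of_nonneg (by positivity)]
    simp only [Pi.add_apply]
    rcases le_or_gt 1 (|t - l|) with h | h
    · have h1 : |t-l|⁻¹ ≤ 1 := by
        rw [inv_le_one_iff₀]; right; exact h
      have h2 : (0:ℝ) ≤ ((t-l)^2)⁻¹ := by positivity
      linarith
    · rcases eq_or_ne t l with rfl | ht
      · simp
      · have hne : t - l ≠ 0 := sub_ne_zero.mpr ht
        have h0 : 0 < |t - l| := abs_pos.mpr hne
        have hle : |t-l|⁻¹ ≤ ((t-l)^2)⁻¹ := by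
          rw [← _root_.sq_abs, sq, mul_inv]
          nth_rewrite 1 [← one_mul (|t-l|⁻¹)]
          apply mul_le_mul _ le_rfl (by positivity) (by positivity)
          rw [one_le_inv_iff₀]
          exact ⟨h0, le_of_lt h⟩
        have h2 : (0:ℝ) ≤ (1:ℝ) := zero_le_one
        linarith
end

section
variable (ν : Measure ℝ) [IsFiniteMeasure ν] (l : ℝ)

lemma pm_key_ne (t l y : ℝ) (hy : y ≠ 0) : (t:ℂ) - (l + y*Complex.I) ≠ 0 := by
  intro h
  have h2 := congrArg Complex.im h
  simp at h2
  exact hy h2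

lemma pm_re_ne (t l : ℝ) (h : t ≠ l) : (t:ℂ) - (l:ℂ) ≠ 0 := by
  rw [sub_ne_zero]
  exact_mod_cast fun h' => h (by exact_mod_cast h')

lemma pm_abs_re (t l y : ℝ) : |t - l| ≤ ‖(t:ℂ) - (l + y*Complex.I)‖ := by
  have := Complex.abs_re_le_norm ((t:ℂ) - (l + y*Complex.I))
  simpa using this

lemma pm_abs_im (t l y : ℝ) : |y| ≤ ‖(t:ℂ) - (l + y*Complex.I)‖ := by
  have := Complex.abs_im_le_norm ((t:ℂ) - (l + y*Complex.I))
  rw [Complex.sub_im] at this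
  simp only [Complex.ofReal_im, Complex.add_im, Complex.ofReal_re, Complex.mul_im,
    Complex.I_im, Complex.I_re] at this
  simpa using this

lemma pm_norm_inv_le (t l y : ℝ) (h : t ≠ l) :
    ‖((t:ℂ) - (l + y*Complex.I))⁻¹‖ ≤ |t - l|⁻¹ := by
  rw [norm_inv]
  exact inv_anti₀ (abs_pos.mpr (sub_ne_zero.mpr h)) (pm_abs_re t l y)

lemma pm_meas (z : ℂ) : AEStronglyMeasurable (fun t : ℝ => ((t:ℂ) - z)⁻¹) ν :=
  ((Complex.measurable_ofReal.sub measurable_const).inv).aestronglyMeasurable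

lemma pm_tendsto_F (hG : ∫⁻ t, (ENNReal.ofReal ((l-t)^2))⁻¹ ∂ν < ∞) :
    Tendsto (fun y : ℝ => ∫ t, ((t:ℂ)-(l+y*Complex.I))⁻¹ ∂ν) (𝓝[>]0)
      (𝓝 (∫ t, ((t:ℂ)-l)⁻¹ ∂ν)) := by
  apply tendsto_integral_filter_of_dominated_convergence (bound := fun t => |t-l|⁻¹)
  · filter_upwards with y; exact pm_meas ν _
  · filter_upwards with y
    filter_upwards [pm_ae_ne ν l hG] with t ht
    exact pm_norm_inv_le t l y ht
  · exact pm_int_abs ν l hG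
  · filter_upwards [pm_ae_ne ν l hG] with t ht
    have hc : Tendsto (fun y : ℝ => (t:ℂ)-(l+y*Complex.I)) (𝓝 0) (𝓝 ((t:ℂ)-l)) := by
      have : Continuous (fun y : ℝ => (t:ℂ)-(l+y*Complex.I)) := by continuity
      have h0 := this.tendsto 0
      simpa using h0
    exact ((hc.inv₀ (pm_re_ne t l ht)).mono_left nhdsWithin_le_nhds)

lemma pm_tendsto_H (hG : ∫⁻ t, (ENNReal.ofReal ((l-t)^2))⁻¹ ∂ν < ∞) :
    Tendsto (fun y : ℝ => ∫ t, (((t:ℂ)-l) * ((t:ℂ)-(l+y*Complex.I)))⁻¹ ∂ν) (𝓝[>]0)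
      (𝓝 (∫ t, (((t:ℂ)-l) * ((t:ℂ)-l))⁻¹ ∂ν)) := by
  apply tendsto_integral_filter_of_dominated_convergence (bound := fun t => ((t-l)^2)⁻¹)
  · filter_upwards with y
    exact (((Complex.measurable_ofReal.sub measurable_const).mul
      (Complex.measurable_ofReal.sub measurable_const)).inv).aestronglyMeasurable
  · filter_upwards with y
    filter_upwards [pm_ae_ne ν l hG] with t ht
    rw [mul_inv, norm_mul, norm_inv]
    have h1 : ‖(t:ℂ) - (l:ℂ)‖ = |t - l| := by
      rw [show (t:ℂ) - (l:ℂ) = ((t - l : ℝ) : ℂ) by push_cast; ring, Complex.norm_real,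
        Real.norm_eq_abs]
    rw [h1, show ((t-l)^2)⁻¹ = |t-l|⁻¹ * |t-l|⁻¹ by rw [← mul_inv, ← _root_.sq_abs, sq]]
    exact mul_le_mul le_rfl (pm_norm_inv_le t l y ht) (norm_nonneg _) (by positivity)
  · exact pm_int_sq ν l hG
  · filter_upwards [pm_ae_ne ν l hG] with t ht
    have hc : Tendsto (fun y : ℝ => ((t:ℂ)-l) * ((t:ℂ)-(l+y*Complex.I))) (𝓝 0)
        (𝓝 (((t:ℂ)-l) * ((t:ℂ)-l))) := by
      have : Continuous (fun y : ℝ => ((t:ℂ)-l) * ((t:ℂ)-(l+y*Complex.I))) := by continuity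
      have h0 := this.tendsto 0
      simpa using h0
    refine ((hc.inv₀ ?_).mono_left nhdsWithin_le_nhds)
    exact mul_ne_zero (pm_re_ne t l ht) (pm_re_ne t l ht)

lemma pm_tendsto_N : Tendsto (fun y : ℝ => ∫ t, ((y:ℂ) * Complex.I) * ((t:ℂ)-(l+y*Complex.I))⁻¹ ∂ν)
    (𝓝[>]0) (𝓝 (-((ν {l}).toReal : ℂ))) := by
  have hval : ∫ t, Set.indicator {l} (fun _ => (-1:ℂ)) t ∂ν = -((ν {l}).toReal : ℂ) := by
    rw [integral_indicator_const _ (measurableSet_singleton l)]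
    simp
    rfl
  rw [← hval]
  apply tendsto_integral_filter_of_dominated_convergence (bound := fun _ => (1:ℝ))
  · filter_upwards with y
    exact (measurable_const.mul
      ((Complex.measurable_ofReal.sub measurable_const).inv)).aestronglyMeasurable
  · filter_upwards [eventually_mem_nhdsWithin] with y (hy : y ∈ Ioi (0:ℝ))
    filter_upwards with t
    rw [norm_mul, norm_inv]
    have h1 : ‖(y:ℂ) * Complex.I‖ = |y| := by
      rw [norm_mul, Complex.norm_real, Complex.norm_I, Real.norm_eq_abs, mul_one]
    rw [h1]
    have hy0 : (0:ℝ) < |y| := abs_pos.mpr (ne_of_gt hy)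
    calc |y| * ‖(t:ℂ) - (l + y*Complex.I)‖⁻¹ ≤ |y| * |y|⁻¹ :=
          mul_le_mul le_rfl (inv_anti₀ hy0 (pm_abs_im t l y)) (by positivity) (le_of_lt hy0)
      _ = 1 := mul_inv_cancel₀ (ne_of_gt hy0)
  · exact integrable_const 1
  · filter_upwards with t
    rcases eq_or_ne t l with rfl | ht
    · apply Tendsto.congr' (f₁ := fun _ => (-1:ℂ))
      · filter_upwards [eventually_mem_nhdsWithin] with y (hy : y ∈ Ioi (0:ℝ))
        have hyne : ((y:ℂ) * Complex.I) ≠ 0 := by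
          simp [Complex.ofReal_ne_zero, ne_of_gt (show (0:ℝ) < y from hy)]
        have : (t:ℂ) - ((t:ℂ) + (y:ℂ)*Complex.I) = -((y:ℂ)*Complex.I) := by ring
        rw [this, inv_neg, mul_neg, mul_inv_cancel₀ hyne]
      · have : Set.indicator {t} (fun _ => (-1:ℂ)) t = -1 := by simp
        rw [this]
        exact tendsto_const_nhds
    · have h0 : Tendsto (fun y : ℝ => ((y:ℂ) * Complex.I) * ((t:ℂ)-(l+y*Complex.I))⁻¹) (𝓝 0)
          (𝓝 (0 * ((t:ℂ)-l)⁻¹)) := by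
        apply Tendsto.mul
        · have : Continuous (fun y : ℝ => (y:ℂ) * Complex.I) := by continuity
          simpa using this.tendsto 0
        · have hc : Tendsto (fun y : ℝ => (t:ℂ)-(l+y*Complex.I)) (𝓝 0) (𝓝 ((t:ℂ)-l)) := by
            have : Continuous (fun y : ℝ => (t:ℂ)-(l+y*Complex.I)) := by continuity
            simpa using this.tendsto 0
          exact hc.inv₀ (pm_re_ne t l ht)
      rw [zero_mul] at h0
      have hind : Set.indicator {l} (fun _ => (-1:ℂ)) t = 0 := by
        simp [Set.indicator_of_notMem, ht]
      rw [hind]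
      exact h0.mono_left nhdsWithin_le_nhds

lemma pm_integral_sq (hG : ∫⁻ t, (ENNReal.ofReal ((l-t)^2))⁻¹ ∂ν < ∞) :
    ∫ t, (((t:ℂ)-l) * ((t:ℂ)-l))⁻¹ ∂ν =
      (((∫⁻ t, (ENNReal.ofReal ((l-t)^2))⁻¹ ∂ν).toReal : ℝ) : ℂ) := by
  have hptwise : ∀ t : ℝ, (((t:ℂ)-l) * ((t:ℂ)-l))⁻¹ = ((((t-l)^2)⁻¹ : ℝ) : ℂ) := by
    intro t
    push_cast
    ring
  rw [integral_congr_ae (Filter.Eventually.of_forall hptwise)]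
  have hreal : ∫ t, ((t-l)^2)⁻¹ ∂ν = (∫⁻ t, (ENNReal.ofReal ((l-t)^2))⁻¹ ∂ν).toReal := by
    rw [integral_eq_lintegral_of_nonneg_ae (Filter.Eventually.of_forall (fun t => by positivity))
      (by measurability : AEStronglyMeasurable (fun t : ℝ => ((t - l)^2)⁻¹) ν)]
    congr 1
    apply lintegral_congr_ae
    filter_upwards [pm_ae_ne ν l hG] with t ht
    have hne : t - l ≠ 0 := sub_ne_zero.mpr ht
    have hpos : 0 < (t-l)^2 := by positivity
    rw [ENNReal.ofReal_inv_of_pos hpos, show (l-t)^2 = (t-l)^2 by ring]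
  rw [← hreal]
  exact integral_ofReal

end


/-- **Point masses**: if `γ ≠ 0`, `lim_{y→0+} F(l+iy) = -1/γ` and `G(l) < ∞`, then the
spectral measure `μ_γ` has point mass `μ_γ({l}) = 1 / (γ² G(l))` at `l`. -/
theorem point_mass_formula
    [TopologicalSpace.SeparableSpace H]
    (A : H →ₗ.[ℂ] H) (hA : IsSelfAdjoint A)
    (φ : H) (hφ : ‖φ‖ = 1)
    (R : ℝ → ℂ → H →L[ℂ] H)
    (hR1 : ∀ (γ : ℝ) (z : ℂ), z.im ≠ 0 → ∀ x : H,
      ∃ h : R γ z x ∈ (rankOnePert A φ γ).domain,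
        (rankOnePert A φ γ) ⟨R γ z x, h⟩ - z • R γ z x = x)
    (hR2 : ∀ (γ : ℝ) (z : ℂ), z.im ≠ 0 → ∀ y (hy : y ∈ (rankOnePert A φ γ).domain),
      R γ z ((rankOnePert A φ γ) ⟨y, hy⟩ - z • y) = y)
    (hcyc : (Submodule.span ℂ {x : H | ∃ z : ℂ, z.im ≠ 0 ∧ x = R 0 z φ}).topologicalClosure = ⊤)
    (μ : ℝ → Measure ℝ) (hfin : ∀ γ, IsFiniteMeasure (μ γ))
    (hμ : ∀ (γ : ℝ) (z : ℂ), z.im ≠ 0 → ⟪φ, R γ z φ⟫_ℂ = borelTransform (μ γ) z)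
    (γ : ℝ) (hγ : γ ≠ 0) (l : ℝ)
    (hlim : Tendsto (fun y : ℝ => borelTransform (μ 0) (l + y * Complex.I)) (𝓝[>] 0)
      (𝓝 (-(γ : ℂ)⁻¹)))
    (hG : Gtransform (μ 0) l < ∞) :
    (μ γ) {l} = (ENNReal.ofReal (γ ^ 2) * Gtransform (μ 0) l)⁻¹ := by
  haveI hν0 : IsFiniteMeasure (μ 0) := hfin 0
  haveI hνγ : IsFiniteMeasure (μ γ) := hfin γ
  have hGlt : ∫⁻ t, (ENNReal.ofReal ((l-t)^2))⁻¹ ∂(μ 0) < ∞ := hG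
  -- Step A : the Aronszajn-Donoghue relation between F and F_γ
  have stepA : ∀ z : ℂ, z.im ≠ 0 →
      (1 + γ * borelTransform (μ 0) z) * borelTransform (μ γ) z = borelTransform (μ 0) z := by
    intro z hz
    obtain ⟨h, heq⟩ := hR1 γ z hz φ
    set u := R γ z φ with hu
    have happ : (rankOnePert A φ γ) ⟨u, h⟩ = A.toFun ⟨u, h⟩ + (γ:ℂ) • (⟪φ, u⟫_ℂ • φ) := rfl
    have h0 : u ∈ (rankOnePert A φ 0).domain := h
    have happ0 : (rankOnePert A φ 0) ⟨u, h0⟩ = A.toFun ⟨u, h⟩ := by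
      show A.toFun ⟨u, h⟩ + (0:ℂ) • (⟪φ, u⟫_ℂ • φ) = _
      simp
    rw [happ] at heq
    have key : A.toFun ⟨u, h⟩ - z • u = φ - ((γ:ℂ) * ⟪φ, u⟫_ℂ) • φ := by
      linear_combination (norm := module) heq
    have h2 := hR2 0 z hz u h0
    rw [happ0, key] at h2
    simp only [map_sub, _root_.map_smul] at h2
    have h4 : ⟪φ, u⟫_ℂ = ⟪φ, R 0 z φ⟫_ℂ - ((γ:ℂ) * ⟪φ, u⟫_ℂ) * ⟪φ, R 0 z φ⟫_ℂ := by
      conv_lhs => rw [← h2]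
      rw [inner_sub_right, inner_smul_right]
    rw [hμ γ z hz, hμ 0 z hz] at h4
    linear_combination h4
  -- Notation
  set ν := μ 0 with hνdef
  set Fl : ℂ := ∫ t : ℝ, ((t:ℂ)-l)⁻¹ ∂ν with hFldef
  -- Step D : F(l+iy) → Fl, hence Fl = -1/γ
  have hFt : Tendsto (fun y : ℝ => borelTransform ν (l + y * Complex.I)) (𝓝[>]0) (𝓝 Fl) := by
    have := pm_tendsto_F ν l hGlt
    exact this
  have hFl : Fl = -(γ:ℂ)⁻¹ := tendsto_nhds_unique hFt hlim
  -- c and G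
  set c : ℝ≥0∞ := ∫⁻ t, (ENNReal.ofReal ((l-t)^2))⁻¹ ∂ν with hcdef
  have hc_ne : c ≠ ∞ := hGlt.ne
  have hc0 : c ≠ 0 := by
    intro hczero
    have hmeas : Measurable fun t : ℝ => (ENNReal.ofReal ((l-t)^2))⁻¹ :=
      ((measurable_const.sub measurable_id).pow_const 2).ennreal_ofReal.inv
    have hae : ∀ᵐ t ∂ν, (ENNReal.ofReal ((l-t)^2))⁻¹ = 0 :=
      (lintegral_eq_zero_iff hmeas).mp hczero
    have hν_zero : ν = 0 := by
      have hset : ν {t : ℝ | ¬ (ENNReal.ofReal ((l-t)^2))⁻¹ = 0} = 0 := hae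
      have huniv : {t : ℝ | ¬ (ENNReal.ofReal ((l-t)^2))⁻¹ = 0} = univ := by
        ext t
        simp [ENNReal.inv_eq_zero, ENNReal.ofReal_ne_top]
      rw [huniv] at hset
      exact Measure.measure_univ_eq_zero.mp hset
    rw [hFl.symm] at hlim
    have : Fl = 0 := by
      rw [hFldef, hν_zero]
      simp
    rw [hFl] at this
    simp only [neg_eq_zero, inv_eq_zero, Complex.ofReal_eq_zero] at this
    exact hγ this
  set G : ℝ := c.toReal with hGdef
  have hGpos : 0 < G := ENNReal.toReal_pos hc0 hc_ne
  -- Step E : H integral tends to G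
  have hH : Tendsto (fun y : ℝ => ∫ t, (((t:ℂ)-l) * ((t:ℂ)-(l+y*Complex.I)))⁻¹ ∂ν) (𝓝[>]0)
      (𝓝 ((G:ℝ) : ℂ)) := by
    have h1 := pm_tendsto_H ν l hGlt
    rwa [pm_integral_sq ν l hGlt] at h1
  -- Step (difference quotient identity)
  have hiHy : ∀ y : ℝ, 0 < y → borelTransform ν (l + y * Complex.I) - Fl =
      ((y:ℂ) * Complex.I) * ∫ t, (((t:ℂ)-l) * ((t:ℂ)-(l+y*Complex.I)))⁻¹ ∂ν := by
    intro y hy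
    have hyne : y ≠ 0 := ne_of_gt hy
    have int1 : Integrable (fun t : ℝ => ((t:ℂ)-(l+y*Complex.I))⁻¹) ν := by
      refine Integrable.mono' (integrable_const (|y|⁻¹)) (pm_meas ν _) ?_
      filter_upwards with t
      rw [norm_inv]
      exact inv_anti₀ (abs_pos.mpr hyne) (pm_abs_im t l y)
    have int2 : Integrable (fun t : ℝ => ((t:ℂ)-(l:ℂ))⁻¹) ν := by
      refine Integrable.mono' (pm_int_abs ν l hGlt) (pm_meas ν _) ?_
      filter_upwards with t
      rw [norm_inv, show (t:ℂ) - (l:ℂ) = ((t - l : ℝ) : ℂ) by push_cast; ring,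
        Complex.norm_real, Real.norm_eq_abs]
    have hcong : ∫ t : ℝ, (((t:ℂ)-(l+y*Complex.I))⁻¹ - ((t:ℂ)-(l:ℂ))⁻¹) ∂ν =
        ∫ t : ℝ, ((y:ℂ) * Complex.I) * (((t:ℂ)-l) * ((t:ℂ)-(l+y*Complex.I)))⁻¹ ∂ν := by
      apply integral_congr_ae
      filter_upwards [pm_ae_ne ν l hGlt] with t ht
      have ha : (t:ℂ) - (l:ℂ) ≠ 0 := pm_re_ne t l ht
      have hb : (t:ℂ) - ((l:ℂ) + y*Complex.I) ≠ 0 := pm_key_ne t l y hyne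
      field_simp
      ring
    rw [borelTransform, hFldef, ← integral_sub int1 int2, hcong, integral_const_mul]
  -- Step G : convergence of N y := iy * F_γ(l+iy)
  set N : ℝ → ℂ := fun y => ((y:ℂ) * Complex.I) * borelTransform (μ γ) (l + y * Complex.I)
    with hNdef
  set D : ℝ → ℂ := fun y => (γ:ℂ) * ∫ t, (((t:ℂ)-l) * ((t:ℂ)-(l+y*Complex.I)))⁻¹ ∂ν with hDdef
  have hD : Tendsto D (𝓝[>]0) (𝓝 ((γ:ℂ) * (G:ℂ))) := tendsto_const_nhds.mul hH
  have hDne : (γ:ℂ) * (G:ℂ) ≠ 0 := by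
    apply mul_ne_zero
    · exact_mod_cast hγ
    · exact_mod_cast ne_of_gt hGpos
  have hND : ∀ y : ℝ, 0 < y → N y * D y = borelTransform ν (l + y * Complex.I) := by
    intro y hy
    have him : (↑l + ↑y * Complex.I).im ≠ 0 := by
      simp [ne_of_gt hy]
    have h1 := stepA (l + y * Complex.I) him
    have h2 := hiHy y hy
    have hγC : (γ:ℂ) ≠ 0 := by exact_mod_cast hγ
    have hgFl : (γ:ℂ) * Fl = -1 := by
      rw [hFl, mul_neg, mul_inv_cancel₀ hγC]
    simp only [hNdef, hDdef]
    linear_combination (-(borelTransform (μ γ) (↑l + ↑y * Complex.I) * (γ:ℂ))) * h2 + h1 -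
      borelTransform (μ γ) (↑l + ↑y * Complex.I) * hgFl
  have hNDt : Tendsto (fun y => N y * D y) (𝓝[>]0) (𝓝 Fl) := by
    apply Tendsto.congr' _ hFt
    filter_upwards [eventually_mem_nhdsWithin] with y (hy : y ∈ Ioi (0:ℝ))
    exact (hND y hy).symm
  have hNt : Tendsto N (𝓝[>]0) (𝓝 (Fl / ((γ:ℂ) * (G:ℂ)))) := by
    have hdiv := hNDt.div hD hDne
    apply Tendsto.congr' _ hdiv
    filter_upwards [hD.eventually_ne hDne] with y hy
    show N y * D y / D y = N y
    exact mul_div_cancel_right₀ (N y) hy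
  -- Step H : N y → -μ_γ({l}).toReal
  have hNt2 : Tendsto N (𝓝[>]0) (𝓝 (-(((μ γ) {l}).toReal : ℂ))) := by
    have h1 := pm_tendsto_N (μ γ) l
    apply Tendsto.congr _ h1
    intro y
    show ∫ t : ℝ, ((y:ℂ) * Complex.I) * ((t:ℂ)-(l+y*Complex.I))⁻¹ ∂(μ γ) =
      ((y:ℂ) * Complex.I) * borelTransform (μ γ) (l + y*Complex.I)
    rw [borelTransform, integral_const_mul]
  -- combine
  have heqc : -(((μ γ) {l}).toReal : ℂ) = Fl / ((γ:ℂ) * (G:ℂ)) := tendsto_nhds_unique hNt2 hNt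
  rw [hFl] at heqc
  have hval : ((μ γ) {l}).toReal = (γ^2 * G)⁻¹ := by
    have h2 : -((((μ γ) {l}).toReal : ℝ) : ℂ) = (((-(γ⁻¹) / (γ * G) : ℝ)) : ℂ) := by
      rw [heqc]
      push_cast
      ring
    have h3 : ((μ γ) {l}).toReal = -(-(γ⁻¹) / (γ * G)) := by
      have := (neg_eq_iff_eq_neg.mp h2)
      exact_mod_cast this
    rw [h3]
    field_simp
  rw [show Gtransform (μ 0) l = c from rfl]
  rw [← ENNReal.ofReal_toReal (measure_ne_top (μ γ) {l}), hval]
  rw [← ENNReal.ofReal_toReal hc_ne, ← hGdef,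
    ← ENNReal.ofReal_mul (by positivity : (0:ℝ) ≤ γ^2),
    ← ENNReal.ofReal_inv_of_pos (by positivity : (0:ℝ) < γ^2 * G)]
end

section
/- Let θ: 𝔻 → 𝔻 be an inner function and for α ∈ 𝕋 let μ_α be the Clark measure of θ at α, the unique positive Borel measure on 𝕋 whose Poisson integral equals (1 − |θ(z)|²)/|α − θ(z)|² on 𝔻. Then for any two distinct α, β ∈ 𝕋, the measures μ_α and μ_β are mutually singular. -/
open MeasureTheory Filter Set Complex Metric
open scoped ENNReal Topology

/-- Normalized Lebesgue (arc length) measure on the unit circle in `ℂ`. -/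
noncomputable def circleMeasure : Measure ℂ :=
  (ENNReal.ofReal (2 * Real.pi)⁻¹) •
    (Measure.map (fun t : ℝ => Complex.exp (t * Complex.I))
      (volume.restrict (Ioc (0 : ℝ) (2 * Real.pi))))

/-- `f` has nontangential limit `L` at the boundary point `ζ` of the unit disk:
`f(z) → L` as `z → ζ` within every Stolz angle at `ζ`. -/
def NTLim (f : ℂ → ℂ) (ζ L : ℂ) : Prop :=
  ∀ M : ℝ, 1 < M →
    Tendsto f (𝓝[{z : ℂ | ‖z‖ < 1 ∧ ‖ζ - z‖ < M * (1 - ‖z‖)}] ζ) (𝓝 L)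


/-!
Write `P(w, γ) = (1 - |w|²) / |γ - w|²`, so that Clark's identity reads
`P(θ z, γ) = ∫ P(z, ·) dμ_γ`. Since `P(rζ, ·) ≥ 1 / (4(1 - r))` on the arc of radius `1 - r`
around `ζ`, the ratio of `μ_γ` to arc length `m` on that arc is at most `8π P(θ(rζ), γ)`.
Where `θ` has a radial limit of modulus one other than `γ`, this bound tends to `0`, so the
density of `μ_γ` with respect to `m` vanishes there; on the other hand, at the points carrying
the singular part of `μ_γ` the ratio tends to `∞`, which forces `θ(rζ) → γ`. Hence `μ_γ` is
carried by the points where the radial limit of `θ` is `γ`, and these sets are disjoint for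
distinct `γ`.
-/

open scoped Real

/-- Mathlib's `poissonKernel 0 z ζ` with `‖ζ‖ ^ 2` replaced by `1`, so that the left side of
Clark's identity is literally `diskPoissonKernel (θ z) γ`. -/
noncomputable def diskPoissonKernel (z ζ : ℂ) : ℝ := (1 - ‖z‖ ^ 2) / ‖ζ - z‖ ^ 2

structure IsClarkMeasure (θ : ℂ → ℂ) (γ : ℂ) (μ : Measure ℂ) : Prop where
  measure_compl_sphere : μ (sphere (0 : ℂ) 1)ᶜ = 0
  diskPoissonKernel_eq_integral :
    ∀ z ∈ ball (0 : ℂ) 1, diskPoissonKernel (θ z) γ = ∫ ζ, diskPoissonKernel z ζ ∂μ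

section DiskPoissonKernel

theorem diskPoissonKernel_nonneg {z : ℂ} (hz : ‖z‖ ≤ 1) (ζ : ℂ) : 0 ≤ diskPoissonKernel z ζ := by
  have hsq : ‖z‖ ^ 2 ≤ 1 := pow_le_one₀ (norm_nonneg z) hz
  exact div_nonneg (by linarith) (by positivity)

theorem diskPoissonKernel_le {z ζ : ℂ} (hz : ‖z‖ < 1) (hζ : ‖ζ‖ = 1) :
    diskPoissonKernel z ζ ≤ (1 + ‖z‖) / (1 - ‖z‖) := by
  have hz' : 0 < 1 - ‖z‖ := by linarith
  have hdist : 1 - ‖z‖ ≤ ‖ζ - z‖ := by linarith [norm_sub_norm_le ζ z]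
  have hsq : ‖z‖ ^ 2 ≤ 1 := pow_le_one₀ (norm_nonneg z) hz.le
  calc diskPoissonKernel z ζ ≤ (1 - ‖z‖ ^ 2) / (1 - ‖z‖) ^ 2 := by
        unfold diskPoissonKernel
        gcongr
    _ = (1 + ‖z‖) / (1 - ‖z‖) := by
        rw [div_eq_div_iff (by positivity) hz'.ne']
        ring

theorem inv_le_diskPoissonKernel {ζ₀ ζ : ℂ} {r : ℝ} (hζ₀ : ‖ζ₀‖ = 1) (hζ : ‖ζ‖ = 1)
    (hr0 : 0 ≤ r) (hr1 : r < 1) (h : ‖ζ - ζ₀‖ ≤ 1 - r) :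
    (4 * (1 - r))⁻¹ ≤ diskPoissonKernel (r • ζ₀) ζ := by
  have hz : ‖r • ζ₀‖ = r := by rw [norm_smul, hζ₀, Real.norm_of_nonneg hr0, mul_one]
  have hlower : 1 - r ≤ ‖ζ - r • ζ₀‖ := by linarith [norm_sub_norm_le ζ (r • ζ₀)]
  have hupper : ‖ζ - r • ζ₀‖ ≤ 2 * (1 - r) :=
    calc ‖ζ - r • ζ₀‖ ≤ ‖ζ - ζ₀‖ + ‖ζ₀ - r • ζ₀‖ := norm_sub_le_norm_sub_add_norm_sub _ _ _
      _ = ‖ζ - ζ₀‖ + (1 - r) := by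
        rw [show ζ₀ - r • ζ₀ = (1 - r) • ζ₀ by module, norm_smul, hζ₀,
          Real.norm_of_nonneg (by linarith), mul_one]
      _ ≤ 2 * (1 - r) := by linarith
  have hr : 0 < 1 - r := by linarith
  unfold diskPoissonKernel
  rw [hz]
  calc (4 * (1 - r))⁻¹ = (1 - r) / (2 * (1 - r)) ^ 2 := by field_simp; ring
    _ ≤ (1 - r ^ 2) / ‖ζ - r • ζ₀‖ ^ 2 :=
        div_le_div₀ (by nlinarith) (by nlinarith) (by nlinarith)
          (pow_le_pow_left₀ (norm_nonneg _) hupper 2)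

theorem tendsto_diskPoissonKernel_zero {ι : Type*} {l : Filter ι} {f : ι → ℂ} {L γ : ℂ}
    (hf : Tendsto f l (𝓝 L)) (hL : ‖L‖ = 1) (hLγ : L ≠ γ) :
    Tendsto (fun i => diskPoissonKernel (f i) γ) l (𝓝 0) := by
  have hcont : ContinuousAt (fun w => (1 - ‖w‖ ^ 2) / ‖γ - w‖ ^ 2) L :=
    ContinuousAt.div (by fun_prop) (by fun_prop) (by simpa [sub_eq_zero] using hLγ.symm)
  have hzero : (1 - ‖L‖ ^ 2) / ‖γ - L‖ ^ 2 = 0 := by simp [hL]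
  have hlim := hcont.tendsto.comp hf
  rw [hzero] at hlim
  exact hlim

theorem tendsto_of_tendsto_diskPoissonKernel_atTop {ι : Type*} {l : Filter ι} {f : ι → ℂ} {γ : ℂ}
    (hf : Tendsto (fun i => diskPoissonKernel (f i) γ) l atTop) : Tendsto f l (𝓝 γ) := by
  have hsq : ∀ᶠ i in l, ‖f i - γ‖ ^ 2 ≤ (diskPoissonKernel (f i) γ)⁻¹ := by
    filter_upwards [hf.eventually_gt_atTop 0] with i hi
    have hne : ‖γ - f i‖ ^ 2 ≠ 0 := fun h => by simp [diskPoissonKernel, h] at hi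
    rw [← one_div, le_div_iff₀ hi, norm_sub_rev, diskPoissonKernel, mul_div_cancel₀ _ hne]
    nlinarith [sq_nonneg ‖f i‖]
  have hsq0 : Tendsto (fun i => ‖f i - γ‖ ^ 2) l (𝓝 0) :=
    squeeze_zero' (Eventually.of_forall fun _ => by positivity) hsq hf.inv_tendsto_atTop
  rw [tendsto_iff_norm_sub_tendsto_zero]
  simpa using hsq0.sqrt

end DiskPoissonKernel

section CircleMeasure

theorem circleMeasure_apply {s : Set ℂ} (hs : MeasurableSet s) :
    circleMeasure s = ENNReal.ofReal (2 * π)⁻¹ *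
      volume ((fun t : ℝ => exp (t * I)) ⁻¹' s ∩ Ioc 0 (2 * π)) := by
  have hexp : Measurable fun t : ℝ => exp (t * I) := by fun_prop
  rw [circleMeasure, Measure.smul_apply, Measure.map_apply hexp hs,
    Measure.restrict_apply (hexp hs), smul_eq_mul]

instance isFiniteMeasure_circleMeasure : IsFiniteMeasure circleMeasure :=
  ⟨ENNReal.mul_lt_top ENNReal.ofReal_lt_top (measure_lt_top _ _)⟩

theorem circleMeasure_compl_sphere : circleMeasure (sphere (0 : ℂ) 1)ᶜ = 0 := by
  have hempty : (fun t : ℝ => exp (t * I)) ⁻¹' (sphere (0 : ℂ) 1)ᶜ = ∅ := by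
    ext t
    simp [norm_exp_ofReal_mul_I]
  rw [circleMeasure_apply isClosed_sphere.measurableSet.compl, hempty, empty_inter,
    measure_empty, mul_zero]

theorem norm_exp_mul_I_sub_exp_mul_I_le (s t : ℝ) : ‖exp (t * I) - exp (s * I)‖ ≤ |t - s| := by
  have h : exp (t * I) - exp (s * I) = exp (s * I) * (exp (I * (t - s : ℝ)) - 1) := by
    rw [mul_sub, mul_one, ← Complex.exp_add]; push_cast; ring_nf
  rw [h, norm_mul, norm_exp_ofReal_mul_I, one_mul]
  exact Real.norm_exp_I_mul_ofReal_sub_one_le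

theorem exists_mem_Ioc_exp_mul_I_eq {ζ : ℂ} (hζ : ‖ζ‖ = 1) :
    ∃ s ∈ Ioc 0 (2 * π), exp (s * I) = ζ := by
  have hexp : exp (arg ζ * I) = ζ := by
    simpa [hζ] using norm_mul_exp_arg_mul_I ζ
  rcases le_or_gt (arg ζ) 0 with h | h
  · refine ⟨arg ζ + 2 * π, ⟨by linarith [neg_pi_lt_arg ζ], by linarith⟩, ?_⟩
    rw [show ((arg ζ + 2 * π : ℝ) : ℂ) * I = arg ζ * I + 2 * π * I by push_cast; ring,
      Complex.exp_add, exp_two_pi_mul_I, mul_one, hexp]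
  · exact ⟨arg ζ, ⟨h, by linarith [arg_le_pi ζ, Real.pi_pos]⟩, hexp⟩

theorem ofReal_div_le_circleMeasure_closedBall {ζ : ℂ} (hζ : ‖ζ‖ = 1) {δ : ℝ}
    (hδ0 : 0 ≤ δ) (hδπ : δ ≤ π) :
    ENNReal.ofReal (δ / (2 * π)) ≤ circleMeasure (closedBall ζ δ) := by
  obtain ⟨s, ⟨hs0, hs2π⟩, rfl⟩ := exists_mem_Ioc_exp_mul_I_eq hζ
  -- an arc of length `δ` starting at `s`, on whichever side stays inside `(0, 2π]`
  set J : Set ℝ := if s ≤ π then Ioc s (s + δ) else Ioc (s - δ) s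
  have hJ : J ⊆ (fun t : ℝ => exp (t * I)) ⁻¹' closedBall (exp (s * I)) δ ∩ Ioc 0 (2 * π) := by
    intro t ht
    have hball : |t - s| ≤ δ → exp (t * I) ∈ closedBall (exp (s * I)) δ := fun h => by
      rw [mem_closedBall, dist_eq_norm]
      exact (norm_exp_mul_I_sub_exp_mul_I_le s t).trans h
    simp only [J] at ht
    split_ifs at ht with hs <;> obtain ⟨h1, h2⟩ := ht <;>
      exact ⟨hball (abs_le.2 ⟨by linarith, by linarith⟩), by linarith, by linarith⟩
  have hvol : volume J = ENNReal.ofReal δ := by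
    simp only [J]; split_ifs <;> simp
  rw [circleMeasure_apply measurableSet_closedBall, div_eq_inv_mul,
    ENNReal.ofReal_mul (by positivity), ← hvol]
  gcongr

end CircleMeasure

theorem tendsto_one_sub_nhdsLT_one : Tendsto (fun r : ℝ => 1 - r) (𝓝[<] (1 : ℝ)) (𝓝[>] 0) := by
  refine tendsto_nhdsWithin_iff.2 ⟨?_, ?_⟩
  · have h : Tendsto (fun r : ℝ => 1 - r) (𝓝 1) (𝓝 (1 - 1)) := tendsto_const_nhds.sub tendsto_id
    simpa using h.mono_left nhdsWithin_le_nhds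
  · filter_upwards [self_mem_nhdsWithin] with r (hr : r < 1)
    exact sub_pos.2 hr

section SupportedOnCircle

variable {μ : Measure ℂ}

theorem ae_norm_eq_one (hμ : μ (sphere (0 : ℂ) 1)ᶜ = 0) : ∀ᵐ ζ ∂μ, ‖ζ‖ = 1 :=
  (measure_eq_zero_iff_ae_notMem.1 hμ).mono fun ζ hζ => by simpa using hζ

variable [IsFiniteMeasure μ]

theorem integrable_diskPoissonKernel (hμ : μ (sphere (0 : ℂ) 1)ᶜ = 0) {z : ℂ} (hz : ‖z‖ < 1) :
    Integrable (diskPoissonKernel z) μ := by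
  have hmeas : Measurable (diskPoissonKernel z) := measurable_const.div (by fun_prop)
  refine Integrable.mono' (integrable_const ((1 + ‖z‖) / (1 - ‖z‖))) hmeas.aestronglyMeasurable ?_
  filter_upwards [ae_norm_eq_one hμ] with ζ hζ
  rw [Real.norm_of_nonneg (diskPoissonKernel_nonneg hz.le ζ)]
  exact diskPoissonKernel_le hz hζ

theorem measure_closedBall_le_integral_diskPoissonKernel (hμ : μ (sphere (0 : ℂ) 1)ᶜ = 0)
    {ζ₀ : ℂ} (hζ₀ : ‖ζ₀‖ = 1) {r : ℝ} (hr0 : 0 ≤ r) (hr1 : r < 1) :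
    μ (closedBall ζ₀ (1 - r)) ≤
      ENNReal.ofReal (4 * (1 - r) * ∫ ζ, diskPoissonKernel (r • ζ₀) ζ ∂μ) := by
  have hz : ‖r • ζ₀‖ < 1 := by rwa [norm_smul, hζ₀, Real.norm_of_nonneg hr0, mul_one]
  set S := {ζ | (4 * (1 - r))⁻¹ ≤ diskPoissonKernel (r • ζ₀) ζ}
  have hball : closedBall ζ₀ (1 - r) ≤ᵐ[μ] S := by
    filter_upwards [ae_norm_eq_one hμ] with ζ hζ hmem
    exact inv_le_diskPoissonKernel hζ₀ hζ hr0 hr1 (mem_closedBall_iff_norm.1 hmem)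
  have hmarkov := mul_meas_ge_le_integral_of_nonneg
    (Eventually.of_forall (diskPoissonKernel_nonneg hz.le)) (integrable_diskPoissonKernel hμ hz)
    (4 * (1 - r))⁻¹
  rw [inv_mul_le_iff₀ (by linarith)] at hmarkov
  calc μ (closedBall ζ₀ (1 - r)) ≤ μ S := measure_mono_ae hball
    _ = ENNReal.ofReal (μ.real S) := (ENNReal.ofReal_toReal (measure_ne_top μ S)).symm
    _ ≤ _ := ENNReal.ofReal_le_ofReal hmarkov

end SupportedOnCircle

namespace IsClarkMeasure

variable {θ : ℂ → ℂ} {γ : ℂ} {μ : Measure ℂ} [IsFiniteMeasure μ]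

theorem eventually_measure_div_circleMeasure_le (hμ : IsClarkMeasure θ γ μ) {ζ : ℂ}
    (hζ : ‖ζ‖ = 1) :
    ∀ᶠ r in 𝓝[<] (1 : ℝ), μ (closedBall ζ (1 - r)) / circleMeasure (closedBall ζ (1 - r)) ≤
      ENNReal.ofReal (8 * π * diskPoissonKernel (θ (r • ζ)) γ) := by
  filter_upwards [Ioo_mem_nhdsLT (zero_lt_one' ℝ)] with r ⟨hr0, hr1⟩
  have hball : r • ζ ∈ ball (0 : ℂ) 1 := by
    rwa [mem_ball_zero_iff, norm_smul, hζ, Real.norm_of_nonneg hr0.le, mul_one]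
  have hnum :=
    measure_closedBall_le_integral_diskPoissonKernel hμ.measure_compl_sphere hζ hr0.le hr1
  rw [← hμ.diskPoissonKernel_eq_integral _ hball] at hnum
  have hden := ofReal_div_le_circleMeasure_closedBall hζ (sub_nonneg.2 hr1.le)
    (by linarith [Real.pi_gt_three])
  calc _ ≤ ENNReal.ofReal (4 * (1 - r) * diskPoissonKernel (θ (r • ζ)) γ) /
        ENNReal.ofReal ((1 - r) / (2 * π)) := ENNReal.div_le_div hnum hden
    _ = _ := by
      rw [← ENNReal.ofReal_div_of_pos (div_pos (sub_pos.2 hr1) Real.two_pi_pos)]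
      congr 1
      field_simp
      ring

theorem rnDeriv_eq_zero_of_tendsto (hμ : IsClarkMeasure θ γ μ) :
    ∀ᵐ ζ ∂circleMeasure, ∀ L : ℂ, ‖L‖ = 1 → L ≠ γ →
      Tendsto (fun r : ℝ => θ (r • ζ)) (𝓝[<] (1 : ℝ)) (𝓝 L) → μ.rnDeriv circleMeasure ζ = 0 := by
  filter_upwards [Besicovitch.ae_tendsto_rnDeriv μ circleMeasure,
    ae_norm_eq_one circleMeasure_compl_sphere] with ζ hdensity hζ L hL hLγ hlim
  have hbound : Tendsto (fun r : ℝ => ENNReal.ofReal (8 * π * diskPoissonKernel (θ (r • ζ)) γ))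
      (𝓝[<] (1 : ℝ)) (𝓝 0) := by
    simpa using ENNReal.tendsto_ofReal
      ((tendsto_diskPoissonKernel_zero hlim hL hLγ).const_mul (8 * π))
  exact nonpos_iff_eq_zero.1 <| le_of_tendsto_of_tendsto
    (hdensity.comp tendsto_one_sub_nhdsLT_one) hbound
    (hμ.eventually_measure_div_circleMeasure_le hζ)

theorem ae_singularPart_tendsto (hμ : IsClarkMeasure θ γ μ) :
    ∀ᵐ ζ ∂μ.singularPart circleMeasure, Tendsto (fun r : ℝ => θ (r • ζ)) (𝓝[<] (1 : ℝ)) (𝓝 γ) := by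
  set σ := μ.singularPart circleMeasure
  have hσμ : σ ≪ μ := Measure.absolutelyContinuous_of_le (Measure.singularPart_le μ circleMeasure)
  filter_upwards [Besicovitch.ae_tendsto_rnDeriv circleMeasure σ,
    (Measure.mutuallySingular_singularPart μ circleMeasure).symm.rnDeriv_ae_eq_zero,
    hσμ.ae_le (ae_norm_eq_one hμ.measure_compl_sphere)] with ζ hdensity hzero hζ
  rw [hzero, Pi.zero_apply] at hdensity
  have hσ : Tendsto (fun r : ℝ => σ (closedBall ζ (1 - r)) / circleMeasure (closedBall ζ (1 - r)))
      (𝓝[<] (1 : ℝ)) (𝓝 ∞) := by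
    have hinv := (hdensity.comp tendsto_one_sub_nhdsLT_one).inv
    rw [ENNReal.inv_zero] at hinv
    refine hinv.congr' ?_
    filter_upwards [Ioo_mem_nhdsLT (zero_lt_one' ℝ)] with r ⟨hr0, hr1⟩
    have hpos : 0 < circleMeasure (closedBall ζ (1 - r)) :=
      (ENNReal.ofReal_pos.2 (div_pos (sub_pos.2 hr1) Real.two_pi_pos)).trans_le
        (ofReal_div_le_circleMeasure_closedBall hζ (sub_nonneg.2 hr1.le)
          (by linarith [Real.pi_gt_three]))
    exact ENNReal.inv_div (Or.inr (measure_ne_top _ _)) (Or.inr hpos.ne')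
  have hP : Tendsto (fun r : ℝ => ENNReal.ofReal (8 * π * diskPoissonKernel (θ (r • ζ)) γ))
      (𝓝[<] (1 : ℝ)) (𝓝 ∞) := by
    refine tendsto_nhds_top_mono hσ ?_
    filter_upwards [hμ.eventually_measure_div_circleMeasure_le hζ] with r hr
    exact (ENNReal.div_le_div_right (Measure.singularPart_le μ circleMeasure _) _).trans hr
  refine tendsto_of_tendsto_diskPoissonKernel_atTop ?_
  exact (tendsto_const_mul_atTop_of_pos (by positivity)).1 (ENNReal.tendsto_ofReal_nhds_top.1 hP)

theorem ae_tendsto (hμ : IsClarkMeasure θ γ μ)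
    (hinner : ∀ᵐ ζ ∂circleMeasure, ∃ L : ℂ, ‖L‖ = 1 ∧
      Tendsto (fun r : ℝ => θ (r • ζ)) (𝓝[<] (1 : ℝ)) (𝓝 L)) :
    ∀ᵐ ζ ∂μ, Tendsto (fun r : ℝ => θ (r • ζ)) (𝓝[<] (1 : ℝ)) (𝓝 γ) := by
  rw [μ.haveLebesgueDecomposition_add circleMeasure, ae_add_measure_iff,
    ae_withDensity_iff (Measure.measurable_rnDeriv μ circleMeasure)]
  refine ⟨hμ.ae_singularPart_tendsto, ?_⟩
  filter_upwards [hinner, hμ.rnDeriv_eq_zero_of_tendsto] with ζ ⟨L, hL, hlim⟩ hzero hne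
  obtain rfl | hLγ := eq_or_ne L γ
  · exact hlim
  · exact absurd (hzero L hL hLγ hlim) hne

end IsClarkMeasure

theorem clark_measures_mutuallySingular_general
    (θ : ℂ → ℂ)
    (hinner : ∀ᵐ ζ ∂circleMeasure, ∃ L : ℂ, ‖L‖ = 1 ∧
      Tendsto (fun r : ℝ => θ (r • ζ)) (𝓝[<] (1 : ℝ)) (𝓝 L))
    (α β : ℂ) (hαβ : α ≠ β)
    (μa μb : Measure ℂ) [IsFiniteMeasure μa] [IsFiniteMeasure μb]
    (hsuppa : μa ((sphere (0 : ℂ) 1)ᶜ) = 0) (hsuppb : μb ((sphere (0 : ℂ) 1)ᶜ) = 0)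
    (hPoissona : ∀ z ∈ ball (0 : ℂ) 1,
      (1 - ‖θ z‖ ^ 2) / ‖α - θ z‖ ^ 2 = ∫ ζ : ℂ, (1 - ‖z‖ ^ 2) / ‖ζ - z‖ ^ 2 ∂μa)
    (hPoissonb : ∀ z ∈ ball (0 : ℂ) 1,
      (1 - ‖θ z‖ ^ 2) / ‖β - θ z‖ ^ 2 = ∫ ζ : ℂ, (1 - ‖z‖ ^ 2) / ‖ζ - z‖ ^ 2 ∂μb) :
    μa.MutuallySingular μb := by
  have hα := (IsClarkMeasure.mk hsuppa hPoissona).ae_tendsto hinner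
  have hβ := (IsClarkMeasure.mk hsuppb hPoissonb).ae_tendsto hinner
  refine Measure.mutuallySingular_iff_disjoint_ae.2 (Filter.disjoint_iff.2 ⟨_, hα, _, hβ, ?_⟩)
  exact Set.disjoint_left.2 fun ζ hζα hζβ => hαβ (tendsto_nhds_unique hζα hζβ)

/-- For an inner function `θ`, the Clark measures `μ_α` and `μ_β` associated with two
distinct points `α ≠ β` of the unit circle are mutually singular. -/
theorem clark_measures_mutuallySingular
    (θ : ℂ → ℂ) (hθ : DifferentiableOn ℂ θ (ball (0 : ℂ) 1))
    (hmap : ∀ z ∈ ball (0 : ℂ) 1, ‖θ z‖ < 1)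
    (hinner : ∀ᵐ ζ ∂circleMeasure, ∃ L : ℂ, ‖L‖ = 1 ∧
      Tendsto (fun r : ℝ => θ (r • ζ)) (𝓝[<] (1 : ℝ)) (𝓝 L))
    (α β : ℂ) (hα : α ∈ sphere (0 : ℂ) 1) (hβ : β ∈ sphere (0 : ℂ) 1) (hαβ : α ≠ β)
    (μa μb : Measure ℂ) [IsFiniteMeasure μa] [IsFiniteMeasure μb]
    (hsuppa : μa ((sphere (0 : ℂ) 1)ᶜ) = 0) (hsuppb : μb ((sphere (0 : ℂ) 1)ᶜ) = 0)
    (hPoissona : ∀ z ∈ ball (0 : ℂ) 1,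
      (1 - ‖θ z‖ ^ 2) / ‖α - θ z‖ ^ 2 = ∫ ζ : ℂ, (1 - ‖z‖ ^ 2) / ‖ζ - z‖ ^ 2 ∂μa)
    (hPoissonb : ∀ z ∈ ball (0 : ℂ) 1,
      (1 - ‖θ z‖ ^ 2) / ‖β - θ z‖ ^ 2 = ∫ ζ : ℂ, (1 - ‖z‖ ^ 2) / ‖ζ - z‖ ^ 2 ∂μb) :
    μa.MutuallySingular μb :=
  clark_measures_mutuallySingular_general θ hinner α β hαβ μa μb hsuppa hsuppb hPoissona hPoissonb
end

section
/- Let θ: 𝔻 → 𝔻 be an inner function, α ∈ 𝕋, and μ_α the Clark measure of θ at α. Then the set {ζ ∈ 𝕋 : lim_{r→1⁻} θ(rζ) = α} is a carrier for μ_α, i.e. μ_α(𝕋 \ {ζ ∈ 𝕋 : lim_{r→1⁻} θ(rζ) = α}) = 0. -/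
open MeasureTheory Filter Set Complex Metric
open scoped ENNReal Topology

lemma chord_le_arc (s t : ℝ) :
    ‖Complex.exp (t * Complex.I) - Complex.exp (s * Complex.I)‖ ≤ |t - s| := by
  have h : ∀ x : ℝ, HasDerivAt (fun u : ℝ => Complex.exp (u * Complex.I))
      (Complex.exp (x * Complex.I) * Complex.I) x := by
    intro x
    have h1 : HasDerivAt (fun w : ℂ => Complex.exp (w * Complex.I))
        (Complex.exp ((x : ℂ) * Complex.I) * Complex.I) (x : ℂ) := by
      exact (Complex.hasDerivAt_exp ((x : ℂ) * Complex.I)).comp (x : ℂ)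
        (hasDerivAt_mul_const Complex.I)
    exact h1.comp_ofReal
  have := (convex_univ : Convex ℝ (univ : Set ℝ)).norm_image_sub_le_of_norm_hasDerivWithin_le
    (f := fun u : ℝ => Complex.exp (u * Complex.I))
    (f' := fun x : ℝ => Complex.exp (x * Complex.I) * Complex.I) (C := 1)
    (fun x _ => (h x).hasDerivWithinAt)
    (fun x _ => by simp [Complex.norm_exp]) (mem_univ s) (mem_univ t)
  simpa [Real.norm_eq_abs] using this

lemma measurable_circleMap' : Measurable (fun t : ℝ => Complex.exp (t * Complex.I)) :=
  (Complex.continuous_exp.comp ((Complex.continuous_ofReal.mul continuous_const))).measurable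

instance circleMeasure_finite : IsFiniteMeasure circleMeasure := by
  constructor
  rw [circleMeasure, Measure.smul_apply, smul_eq_mul,
    Measure.map_apply measurable_circleMap' MeasurableSet.univ]
  refine ENNReal.mul_lt_top ENNReal.ofReal_lt_top ?_
  refine lt_of_le_of_lt (measure_mono (subset_univ _)) ?_
  rw [Measure.restrict_apply_univ, Real.volume_Ioc]
  exact ENNReal.ofReal_lt_top

lemma circleMeasure_closedBall_lower {ζ : ℂ} (hζ : ζ ∈ sphere (0:ℂ) 1) {δ : ℝ}
    (hδ0 : 0 < δ) (hδ1 : δ ≤ 1) :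
    ENNReal.ofReal (δ / (2 * Real.pi)) ≤ circleMeasure (closedBall ζ δ) := by
  have hπ := Real.pi_gt_three
  have habs : ‖ζ‖ = 1 := by
    simpa using mem_sphere_zero_iff_norm.1 hζ
  set a := Complex.arg ζ with ha
  have ha1 : -Real.pi < a := Complex.neg_pi_lt_arg ζ
  have ha2 : a ≤ Real.pi := Complex.arg_le_pi ζ
  have hexp0 : Complex.exp (a * Complex.I) = ζ := by
    have := Complex.norm_mul_exp_arg_mul_I ζ
    rwa [habs, Complex.ofReal_one, one_mul] at this
  set t₀ : ℝ := if 0 < a then a else a + 2 * Real.pi with ht₀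
  have ht₀pos : 0 < t₀ := by
    rw [ht₀]; split_ifs with h
    · exact h
    · nlinarith
  have ht₀le : t₀ ≤ 2 * Real.pi := by
    rw [ht₀]; split_ifs with h
    · nlinarith
    · nlinarith
  have hper : Complex.exp (((2 : ℝ) * Real.pi : ℝ) * Complex.I) = 1 := by
    push_cast
    exact Complex.exp_two_pi_mul_I
  have hexp : Complex.exp ((t₀ : ℝ) * Complex.I) = ζ := by
    rw [ht₀]; split_ifs with h
    · exact hexp0
    · push_cast
      rw [add_mul, Complex.exp_add]
      rw [show ((2:ℂ) * (Real.pi:ℂ) * Complex.I) = (((2:ℝ) * Real.pi : ℝ) : ℂ) * Complex.I by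
        push_cast; ring, hper, mul_one]
      exact hexp0
  have hexp2 : Complex.exp (((t₀ + 2 * Real.pi : ℝ)) * Complex.I) = ζ := by
    push_cast
    rw [add_mul, Complex.exp_add]
    rw [show ((2:ℂ) * (Real.pi:ℂ) * Complex.I) = (((2:ℝ) * Real.pi : ℝ) : ℂ) * Complex.I by
      push_cast; ring, hper, mul_one]
    exact_mod_cast hexp
  -- now measure computation
  have hmain : ENNReal.ofReal δ ≤
      (volume.restrict (Ioc (0 : ℝ) (2 * Real.pi)))
        ((fun t : ℝ => Complex.exp (t * Complex.I)) ⁻¹' closedBall ζ δ) := by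
    rw [Measure.restrict_apply (measurable_circleMap' measurableSet_closedBall)]
    by_cases hcase : δ ≤ t₀
    · have hsub : Ioc (t₀ - δ) t₀ ⊆
          (fun t : ℝ => Complex.exp (t * Complex.I)) ⁻¹' closedBall ζ δ ∩
            Ioc (0 : ℝ) (2 * Real.pi) := by
        intro t ht
        obtain ⟨ht1, ht2⟩ := ht
        refine ⟨?_, by constructor <;> linarith⟩
        simp only [mem_preimage, mem_closedBall, Complex.dist_eq]
        calc ‖Complex.exp (t * Complex.I) - ζ‖
            = ‖Complex.exp (t * Complex.I) - Complex.exp ((t₀:ℝ) * Complex.I)‖ := by rw [hexp]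
          _ ≤ |t - t₀| := chord_le_arc t₀ t
          _ ≤ δ := by rw [abs_le]; constructor <;> linarith
      calc ENNReal.ofReal δ = volume (Ioc (t₀ - δ) t₀) := by
            rw [Real.volume_Ioc]; norm_num
        _ ≤ _ := measure_mono hsub
    · push_neg at hcase
      have hsub1 : Ioc (0:ℝ) t₀ ⊆
          (fun t : ℝ => Complex.exp (t * Complex.I)) ⁻¹' closedBall ζ δ ∩
            Ioc (0 : ℝ) (2 * Real.pi) := by
        intro t ht
        obtain ⟨ht1, ht2⟩ := ht
        refine ⟨?_, ht1, le_trans ht2 ht₀le⟩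
        simp only [mem_preimage, mem_closedBall, Complex.dist_eq]
        calc ‖Complex.exp (t * Complex.I) - ζ‖
            = ‖Complex.exp (t * Complex.I) - Complex.exp ((t₀:ℝ) * Complex.I)‖ := by rw [hexp]
          _ ≤ |t - t₀| := chord_le_arc t₀ t
          _ ≤ δ := by rw [abs_le]; constructor <;> linarith
      have hsub2 : Ioc (2 * Real.pi + t₀ - δ) (2 * Real.pi) ⊆
          (fun t : ℝ => Complex.exp (t * Complex.I)) ⁻¹' closedBall ζ δ ∩
            Ioc (0 : ℝ) (2 * Real.pi) := by
        intro t ht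
        obtain ⟨ht1, ht2⟩ := ht
        refine ⟨?_, by linarith, ht2⟩
        simp only [mem_preimage, mem_closedBall, Complex.dist_eq]
        calc ‖Complex.exp (t * Complex.I) - ζ‖
            = ‖Complex.exp (t * Complex.I) - Complex.exp (((t₀ + 2*Real.pi:ℝ)) * Complex.I)‖ := by
              rw [hexp2]
          _ ≤ |t - (t₀ + 2*Real.pi)| := chord_le_arc _ t
          _ ≤ δ := by rw [abs_le]; constructor <;> linarith
      have hdisj : Disjoint (Ioc (0:ℝ) t₀) (Ioc (2 * Real.pi + t₀ - δ) (2 * Real.pi)) := by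
        exact Set.Ioc_disjoint_Ioc.2 ((min_le_left _ _).trans
          ((by linarith : t₀ ≤ 2 * Real.pi + t₀ - δ).trans (le_max_right _ _)))
      calc ENNReal.ofReal δ
          = volume (Ioc (0:ℝ) t₀) + volume (Ioc (2 * Real.pi + t₀ - δ) (2 * Real.pi)) := by
            rw [Real.volume_Ioc, Real.volume_Ioc, ← ENNReal.ofReal_add (by linarith) (by linarith)]
            congr 1; ring
        _ = volume (Ioc (0:ℝ) t₀ ∪ Ioc (2 * Real.pi + t₀ - δ) (2 * Real.pi)) := by
            rw [measure_union hdisj measurableSet_Ioc]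
        _ ≤ _ := measure_mono (union_subset hsub1 hsub2)
  calc ENNReal.ofReal (δ / (2 * Real.pi))
      = ENNReal.ofReal (2 * Real.pi)⁻¹ * ENNReal.ofReal δ := by
        rw [← ENNReal.ofReal_mul (by positivity)]; ring_nf
    _ ≤ ENNReal.ofReal (2 * Real.pi)⁻¹ *
        (Measure.map (fun t : ℝ => Complex.exp (t * Complex.I))
          (volume.restrict (Ioc (0 : ℝ) (2 * Real.pi)))) (closedBall ζ δ) := by
        gcongr
        rw [Measure.map_apply measurable_circleMap' measurableSet_closedBall]
        exact hmain
    _ = circleMeasure (closedBall ζ δ) := by rw [circleMeasure, Measure.smul_apply, smul_eq_mul]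

lemma poisson_lower (θ : ℂ → ℂ) (α : ℂ) (hα : α ∈ sphere (0:ℂ) 1)
    (μa : Measure ℂ) [IsFiniteMeasure μa]
    (hmap : ∀ z ∈ ball (0 : ℂ) 1, ‖θ z‖ < 1)
    (hsupp : μa ((sphere (0 : ℂ) 1)ᶜ) = 0)
    (hPoisson : ∀ z ∈ ball (0 : ℂ) 1,
      (1 - ‖θ z‖ ^ 2) / ‖α - θ z‖ ^ 2 = ∫ ζ : ℂ, (1 - ‖z‖ ^ 2) / ‖ζ - z‖ ^ 2 ∂μa)
    {ζ : ℂ} (hζ : ζ ∈ sphere (0:ℂ) 1) {r : ℝ} (hr0 : 0 ≤ r) (hr1 : r < 1) :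
    (μa (closedBall ζ (1 - r))).toReal / (4 * (1 - r)) ≤
      (1 - ‖θ (r • ζ)‖ ^ 2) / ‖α - θ (r • ζ)‖ ^ 2 := by
  have hζn : ‖ζ‖ = 1 := mem_sphere_zero_iff_norm.1 hζ
  have hαn : ‖α‖ = 1 := mem_sphere_zero_iff_norm.1 hα
  set z : ℂ := r • ζ with hzdef
  have hzn : ‖z‖ = r := by
    rw [hzdef, norm_smul, hζn, Real.norm_eq_abs, _root_.abs_of_nonneg hr0, mul_one]
  have hz : z ∈ ball (0:ℂ) 1 := by rw [mem_ball_zero_iff, hzn]; exact hr1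
  have hθz : ‖θ z‖ < 1 := hmap z hz
  have hθnn : (0:ℝ) ≤ ‖θ z‖ := norm_nonneg _
  have hDpos : 0 < ‖α - θ z‖ ^ 2 := by
    have h0 : α - θ z ≠ 0 := sub_ne_zero.2 (by
      intro h; rw [h] at hαn; exact absurd hαn (ne_of_lt hθz))
    exact pow_pos (norm_pos_iff.2 h0) 2
  have hpos : 0 < (1 - ‖θ z‖ ^ 2) / ‖α - θ z‖ ^ 2 := by
    apply div_pos (by nlinarith) hDpos
  have hEq := hPoisson z hz
  set f : ℂ → ℝ := fun w => (1 - ‖z‖ ^ 2) / ‖w - z‖ ^ 2 with hf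
  have hfnn : ∀ w, 0 ≤ f w := fun w => div_nonneg (by rw [hzn]; nlinarith) (sq_nonneg _)
  have hInt : Integrable f μa := by
    by_contra h
    rw [hf] at h
    rw [integral_undef h] at hEq
    exact absurd hEq (ne_of_gt hpos)
  set S : Set ℂ := closedBall ζ (1 - r) ∩ sphere (0:ℂ) 1 with hS
  have hSmeas : MeasurableSet S := measurableSet_closedBall.inter isClosed_sphere.measurableSet
  set c : ℝ := 1 / (4 * (1 - r)) with hc
  have hle : ∀ w, S.indicator (fun _ => c) w ≤ f w := by
    intro w
    by_cases hw : w ∈ S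
    · rw [indicator_of_mem hw]
      obtain ⟨hw1, hw2⟩ := hw
      have hwn : ‖w‖ = 1 := mem_sphere_zero_iff_norm.1 hw2
      have hwz : ‖w - z‖ ≤ 2 * (1 - r) := by
        have h1 : ‖w - ζ‖ ≤ 1 - r := by
          rw [← dist_eq_norm]; exact mem_closedBall.1 hw1
        have h2 : ‖ζ - z‖ = 1 - r := by
          rw [hzdef, show ζ - r • ζ = (1 - r) • ζ by rw [sub_smul, one_smul],
            norm_smul, hζn, Real.norm_eq_abs, _root_.abs_of_nonneg (by linarith), mul_one]
        calc ‖w - z‖ = ‖(w - ζ) + (ζ - z)‖ := by ring_nf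
          _ ≤ ‖w - ζ‖ + ‖ζ - z‖ := norm_add_le _ _
          _ ≤ 2 * (1 - r) := by rw [h2]; linarith
      have hwzpos : 0 < ‖w - z‖ := by
        rw [norm_pos_iff, sub_ne_zero]
        intro h; rw [h] at hwn; rw [hwn] at hzn; linarith
      rw [hf, hc, hzn, div_le_div_iff₀ (by linarith) (by positivity)]
      nlinarith [pow_le_pow_left₀ (norm_nonneg (w - z)) hwz 2,
        mul_nonneg hr0 (sq_nonneg (1 - r))]
    · rw [indicator_of_notMem hw]; exact hfnn w
  have hIndInt : Integrable (S.indicator fun _ => c) μa :=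
    (integrable_const c).indicator hSmeas
  have hmono := integral_mono hIndInt hInt hle
  rw [integral_indicator_const c hSmeas, smul_eq_mul] at hmono
  have hSμ : μa S = μa (closedBall ζ (1 - r)) := measure_inter_conull hsupp
  rw [measureReal_def, hSμ] at hmono
  calc (μa (closedBall ζ (1 - r))).toReal / (4 * (1 - r))
      = (μa (closedBall ζ (1 - r))).toReal * c := by rw [hc]; ring
    _ ≤ ∫ w, f w ∂μa := hmono
    _ = (1 - ‖θ z‖ ^ 2) / ‖α - θ z‖ ^ 2 := hEq.symm

/-- From an eventual lower bound on ball measures, an eventual lower bound on the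
Poisson quotient along the radius. -/
lemma ratio_to_poisson (θ : ℂ → ℂ) (α : ℂ) (hα : α ∈ sphere (0:ℂ) 1)
    (μa : Measure ℂ) [IsFiniteMeasure μa]
    (hmap : ∀ z ∈ ball (0 : ℂ) 1, ‖θ z‖ < 1)
    (hsupp : μa ((sphere (0 : ℂ) 1)ᶜ) = 0)
    (hPoisson : ∀ z ∈ ball (0 : ℂ) 1,
      (1 - ‖θ z‖ ^ 2) / ‖α - θ z‖ ^ 2 = ∫ ζ : ℂ, (1 - ‖z‖ ^ 2) / ‖ζ - z‖ ^ 2 ∂μa)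
    {ζ : ℂ} (hζ : ζ ∈ sphere (0:ℂ) 1) {c : ℝ} (hc : 0 < c)
    (hev : ∀ᶠ δ in 𝓝[>] (0:ℝ),
      ENNReal.ofReal (δ / (2 * Real.pi)) ≤ ENNReal.ofReal c * μa (closedBall ζ δ)) :
    ∀ᶠ r in 𝓝[<] (1:ℝ),
      1 / (8 * Real.pi * c) ≤ (1 - ‖θ (r • ζ)‖ ^ 2) / ‖α - θ (r • ζ)‖ ^ 2 := by
  have hπ : (0:ℝ) < Real.pi := Real.pi_pos
  have hmap1 : Tendsto (fun r : ℝ => 1 - r) (𝓝[<] (1:ℝ)) (𝓝[>] (0:ℝ)) := by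
    apply tendsto_nhdsWithin_of_tendsto_nhds_of_eventually_within
    · have : Tendsto (fun r : ℝ => 1 - r) (𝓝 (1:ℝ)) (𝓝 (1 - 1)) :=
        (continuous_const.sub continuous_id).tendsto 1
      simpa using this.mono_left nhdsWithin_le_nhds
    · filter_upwards [self_mem_nhdsWithin] with r hr
      simp only [mem_Iio] at hr
      simp only [mem_Ioi]; linarith
  have hIoo : Ioo (0:ℝ) 1 ∈ 𝓝[<] (1:ℝ) := Ioo_mem_nhdsLT_of_mem ⟨zero_lt_one, le_refl 1⟩
  filter_upwards [hmap1.eventually hev, hIoo] with r hμ hr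
  obtain ⟨hr0, hr1⟩ := hr
  set δ := 1 - r with hδ
  have hδ0 : 0 < δ := by rw [hδ]; linarith
  have hμfin : μa (closedBall ζ δ) ≠ ∞ := measure_ne_top _ _
  have htoReal : δ / (2 * Real.pi) ≤ c * (μa (closedBall ζ δ)).toReal := by
    have h1 := ENNReal.toReal_mono
      (by exact ENNReal.mul_ne_top ENNReal.ofReal_ne_top hμfin) hμ
    rwa [ENNReal.toReal_ofReal (by positivity), ENNReal.toReal_mul,
      ENNReal.toReal_ofReal hc.le] at h1
  have hm : δ / (2 * Real.pi * c) ≤ (μa (closedBall ζ δ)).toReal := by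
    rw [div_le_iff₀ (by positivity)]
    rw [div_le_iff₀ (by positivity)] at htoReal
    nlinarith [htoReal]
  calc 1 / (8 * Real.pi * c) = (δ / (2 * Real.pi * c)) / (4 * δ) := by
        field_simp; ring
    _ ≤ (μa (closedBall ζ δ)).toReal / (4 * δ) := by gcongr
    _ ≤ _ := poisson_lower θ α hα μa hmap hsupp hPoisson hζ (le_of_lt hr0) hr1

/-- For an inner function `θ` and `α ∈ 𝕋`, the set
`{ζ ∈ 𝕋 : lim_{r→1⁻} θ(rζ) = α}` is a carrier for the Clark measure `μ_α`. -/
theorem clark_measure_carrier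
    (θ : ℂ → ℂ) (hθ : DifferentiableOn ℂ θ (ball (0 : ℂ) 1))
    (hmap : ∀ z ∈ ball (0 : ℂ) 1, ‖θ z‖ < 1)
    (hinner : ∀ᵐ ζ ∂circleMeasure, ∃ L : ℂ, ‖L‖ = 1 ∧
      Tendsto (fun r : ℝ => θ (r • ζ)) (𝓝[<] (1 : ℝ)) (𝓝 L))
    (α : ℂ) (hα : α ∈ sphere (0 : ℂ) 1)
    (μa : Measure ℂ) [IsFiniteMeasure μa]
    (hsupp : μa ((sphere (0 : ℂ) 1)ᶜ) = 0)
    (hPoisson : ∀ z ∈ ball (0 : ℂ) 1,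
      (1 - ‖θ z‖ ^ 2) / ‖α - θ z‖ ^ 2 = ∫ ζ : ℂ, (1 - ‖z‖ ^ 2) / ‖ζ - z‖ ^ 2 ∂μa) :
    μa ((sphere (0 : ℂ) 1) \
      {ζ : ℂ | Tendsto (fun r : ℝ => θ (r • ζ)) (𝓝[<] (1 : ℝ)) (𝓝 α)}) = 0 := by
  classical
  have hπ : (0:ℝ) < Real.pi := Real.pi_pos
  set g := circleMeasure.rnDeriv μa with hg
  set T := {ζ : ℂ | ∃ L : ℂ, ‖L‖ = 1 ∧
    Tendsto (fun r : ℝ => θ (r • ζ)) (𝓝[<] (1:ℝ)) (𝓝 L)} with hT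
  have hTc : circleMeasure Tᶜ = 0 := hinner
  set N := toMeasurable circleMeasure Tᶜ with hN
  have hNmeas : MeasurableSet N := measurableSet_toMeasurable _ _
  have hNnull : circleMeasure N = 0 := by rw [hN, measure_toMeasurable]; exact hTc
  have hTN : Tᶜ ⊆ N := subset_toMeasurable _ _
  have hgN : ∀ᵐ ζ ∂μa, ζ ∈ N → g ζ = 0 := by
    have hint : ∫⁻ ζ in N, g ζ ∂μa = 0 :=
      le_antisymm ((Measure.setLIntegral_rnDeriv_le N).trans hNnull.le) zero_le
    have h2 := (lintegral_eq_zero_iff (Measure.measurable_rnDeriv _ _)).1 hint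
    exact (ae_restrict_iff' hNmeas).1 h2
  have hbes : ∀ᵐ ζ ∂μa, Tendsto
      (fun δ => circleMeasure (closedBall ζ δ) / μa (closedBall ζ δ))
      (𝓝[>] 0) (𝓝 (g ζ)) := Besicovitch.ae_tendsto_rnDeriv circleMeasure μa
  have hglt : ∀ᵐ ζ ∂μa, g ζ < ∞ := Measure.rnDeriv_lt_top circleMeasure μa
  have hsph : ∀ᵐ ζ ∂μa, ζ ∈ sphere (0:ℂ) 1 := by
    rw [ae_iff]
    exact hsupp
  have key : ∀ᵐ ζ ∂μa,
      Tendsto (fun r : ℝ => θ (r • ζ)) (𝓝[<] (1:ℝ)) (𝓝 α) := by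
    filter_upwards [hbes, hglt, hgN, hsph] with ζ hbζ hgζ hgNζ hζs
    -- common: small δ's are in (0,1], giving the circle lower bound
    have hδsmall : Ioc (0:ℝ) 1 ∈ 𝓝[>] (0:ℝ) := Ioc_mem_nhdsGT_of_mem ⟨le_refl 0, zero_lt_one⟩
    have hcircle : ∀ᶠ δ in 𝓝[>] (0:ℝ),
        ENNReal.ofReal (δ / (2 * Real.pi)) ≤ circleMeasure (closedBall ζ δ) := by
      filter_upwards [hδsmall] with δ hδ
      exact circleMeasure_closedBall_lower hζs hδ.1 hδ.2
    -- generic step: from ratio eventually < ofReal c⁻¹ ... we phrase directly: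
    have hstep : ∀ c : ℝ, 0 < c →
        (∀ᶠ δ in 𝓝[>] (0:ℝ), circleMeasure (closedBall ζ δ) / μa (closedBall ζ δ)
            < ENNReal.ofReal c) →
        ∀ᶠ r in 𝓝[<] (1:ℝ),
          1 / (8 * Real.pi * c) ≤ (1 - ‖θ (r • ζ)‖ ^ 2) / ‖α - θ (r • ζ)‖ ^ 2 := by
      intro c hc hrat
      refine ratio_to_poisson θ α hα μa hmap hsupp hPoisson hζs hc ?_
      filter_upwards [hrat, hcircle, hδsmall] with δ hδ1 hδ2 hδ3
      have hpos0 : 0 < circleMeasure (closedBall ζ δ) :=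
        lt_of_lt_of_le (ENNReal.ofReal_pos.2 (div_pos hδ3.1 (by positivity))) hδ2
      have hμ0 : μa (closedBall ζ δ) ≠ 0 := by
        intro h0
        rw [h0, ENNReal.div_zero hpos0.ne'] at hδ1
        exact absurd hδ1 (by simp)
      have hlt : circleMeasure (closedBall ζ δ) < ENNReal.ofReal c * μa (closedBall ζ δ) :=
        (ENNReal.div_lt_iff (Or.inl hμ0) (Or.inl (measure_ne_top _ _))).1 hδ1
      exact hδ2.trans hlt.le
    by_cases hζN : ζ ∈ N
    · -- singular part: g ζ = 0, Poisson integral blows up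
      have hg0 : g ζ = 0 := hgNζ hζN
      rw [hg0] at hbζ
      rw [Metric.tendsto_nhds]
      intro ε hε
      set c : ℝ := ε ^ 2 / (32 * Real.pi) with hcdef
      have hc : 0 < c := by positivity
      have hrat : ∀ᶠ δ in 𝓝[>] (0:ℝ),
          circleMeasure (closedBall ζ δ) / μa (closedBall ζ δ) < ENNReal.ofReal c :=
        hbζ (isOpen_Iio.mem_nhds (ENNReal.ofReal_pos.2 hc))
      have hP := hstep c hc hrat
      have hIoo : Ioo (0:ℝ) 1 ∈ 𝓝[<] (1:ℝ) := Ioo_mem_nhdsLT_of_mem ⟨zero_lt_one, le_refl 1⟩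
      filter_upwards [hP, hIoo] with r hPr hr
      obtain ⟨hr0, hr1⟩ := hr
      have hzball : (r • ζ) ∈ ball (0:ℂ) 1 := by
        rw [mem_ball_zero_iff, norm_smul, Real.norm_eq_abs, _root_.abs_of_nonneg hr0.le,
          mem_sphere_zero_iff_norm.1 hζs, mul_one]
        exact hr1
      set x := θ (r • ζ) with hx
      have hxlt : ‖x‖ < 1 := hmap _ hzball
      have hD : 0 < ‖α - x‖ ^ 2 := by
        have h0 : α - x ≠ 0 := sub_ne_zero.2 (by
          intro h; rw [← h] at hxlt
          rw [mem_sphere_zero_iff_norm.1 hα] at hxlt; exact lt_irrefl _ hxlt)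
        exact pow_pos (norm_pos_iff.2 h0) 2
      have hc' : 1 / (8 * Real.pi * c) = 4 / ε ^ 2 := by
        rw [hcdef]; field_simp; ring
      rw [hc'] at hPr
      -- derive dist < ε
      have hN1 : 1 - ‖x‖ ^ 2 ≤ 1 := by nlinarith [norm_nonneg x]
      rw [div_le_div_iff₀ (by positivity : (0:ℝ) < ε ^ 2) hD] at hPr
      have hD2 : ‖α - x‖ ^ 2 ≤ ε ^ 2 / 4 := by nlinarith [sq_nonneg ε]
      rw [dist_eq_norm, ← norm_sub_rev]
      nlinarith [norm_nonneg (α - x), hD2, hε]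
    · -- a.e. part: radial limit exists; it must be α
      have hζT : ζ ∈ T := by
        by_contra h
        exact hζN (hTN h)
      obtain ⟨L, hL, hTend⟩ := hζT
      have hLα : L = α := by
        by_contra hne
        -- Poisson quotient tends to 0
        have hnum : Tendsto (fun r : ℝ => 1 - ‖θ (r • ζ)‖ ^ 2) (𝓝[<] (1:ℝ))
            (𝓝 (1 - ‖L‖ ^ 2)) := tendsto_const_nhds.sub ((hTend.norm).pow 2)
        have hden : Tendsto (fun r : ℝ => ‖α - θ (r • ζ)‖ ^ 2) (𝓝[<] (1:ℝ))
            (𝓝 (‖α - L‖ ^ 2)) := ((tendsto_const_nhds.sub hTend).norm).pow 2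
        have hdne : ‖α - L‖ ^ 2 ≠ 0 := by
          have h0 : α - L ≠ 0 := sub_ne_zero.2 (fun h => hne h.symm)
          exact pow_ne_zero _ (norm_ne_zero_iff.2 h0)
        have hP0 : Tendsto (fun r : ℝ =>
            (1 - ‖θ (r • ζ)‖ ^ 2) / ‖α - θ (r • ζ)‖ ^ 2) (𝓝[<] (1:ℝ)) (𝓝 0) := by
          have := hnum.div hden hdne
          rw [hL] at this
          simpa [Pi.div_def] using this
        -- but the quotient is eventually bounded below
        set K : ℝ := (g ζ + 1).toReal with hK
        have hKfin : g ζ + 1 ≠ ∞ := by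
          simp [ENNReal.add_eq_top, hgζ.ne]
        have hKpos : 0 < K := by
          rw [hK]
          refine ENNReal.toReal_pos ?_ hKfin
          simp
        have hrat : ∀ᶠ δ in 𝓝[>] (0:ℝ),
            circleMeasure (closedBall ζ δ) / μa (closedBall ζ δ) < ENNReal.ofReal K := by
          have hlt : g ζ < ENNReal.ofReal K := by
            rw [hK, ENNReal.ofReal_toReal hKfin]
            exact ENNReal.lt_add_right hgζ.ne one_ne_zero
          exact hbζ (isOpen_Iio.mem_nhds hlt)
        have hP := hstep K hKpos hrat
        have hε0 : 0 < 1 / (8 * Real.pi * K) := by positivity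
        have hPlt := hP0.eventually_lt_const hε0
        obtain ⟨r, h1, h2⟩ := (hP.and hPlt).exists
        linarith
      rw [hLα] at hTend
      exact hTend
  refine measure_mono_null ?_ (ae_iff.1 key)
  intro ζ hζ
  exact hζ.2
end
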